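/- arXiv:1404.7536 — 4 statements merged into one kernel-verified Lean document; each statement's English description precedes it below -/
import Mathlib

section
/- Suppose that for every z ∈ F the stochastic quasi-Fejér inequality E[φ(‖x_{n+1} − z‖) | 𝓧_n] + ϑ_n(z) ≤ (1 + χ_n(z)) φ(‖x_n − z‖) + η_n(z) holds P-a.s. for every n ∈ ℕ. Then the sequence (x_n)_{n∈ℕ} is bounded P-almost surely, i.e. sup_{n∈ℕ} ‖x_n‖ < ∞ P-a.s. -/
/-! Fix `z ∈ F` and put `Y n = φ ‖x n - z‖` and `α n = χ n + η n`. The inequality gives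
`E[Y (n+1) + 1 | 𝓧 n] ≤ (1 + α n) (Y n + 1)`, so dividing `Y n + 1` by `∏_{k<n} (1 + α k)` yields a
nonnegative supermartingale. It is bounded in L¹ by its initial mean, hence converges a.s., and
the normalising products stay below `exp (∑ α)`, which is finite a.s. Thus `φ ‖x n - z‖` is a.s.
bounded, and since `φ → ∞` so is `‖x n - z‖`. -/

open MeasureTheory Filter Topology
open scoped RealInnerProductSpace

/-- The σ-algebra σ(x_0, …, x_n) generated by the first n+1 terms of a sequence of
random variables. -/
noncomputable def sigmaFinSeq {Ω H : Type*} [m : MeasurableSpace H]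
    (x : ℕ → Ω → H) (n : ℕ) : MeasurableSpace Ω :=
  ⨆ i ∈ Set.Iic n, MeasurableSpace.comap (x i) m

/-- `p` is a weak sequential cluster point of the sequence `u`. -/
def IsWeakClusterPt {E : Type*} [NormedAddCommGroup E] [InnerProductSpace ℝ E]
    (p : E) (u : ℕ → E) : Prop :=
  ∃ k : ℕ → ℕ, StrictMono k ∧
    ∀ y : E, Filter.Tendsto (fun j => (inner ℝ (u (k j)) y : ℝ)) Filter.atTop
      (nhds (inner ℝ p y : ℝ))

/-- `p` is a strong sequential cluster point of the sequence `u`. -/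
def IsStrongClusterPt {E : Type*} [NormedAddCommGroup E] (p : E) (u : ℕ → E) : Prop :=
  ∃ k : ℕ → ℕ, StrictMono k ∧ Filter.Tendsto (fun j => u (k j)) Filter.atTop (nhds p)

section prodOneAdd

variable {Ω : Type*}

noncomputable def prodOneAdd (α : ℕ → Ω → ℝ) (n : ℕ) (ω : Ω) : ℝ :=
  ∏ k ∈ Finset.range n, (1 + α k ω)

variable {α : ℕ → Ω → ℝ}

lemma prodOneAdd_succ (n : ℕ) (ω : Ω) :
    prodOneAdd α (n + 1) ω = prodOneAdd α n ω * (1 + α n ω) :=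
  Finset.prod_range_succ _ _

lemma one_le_prodOneAdd (hα : ∀ n ω, 0 ≤ α n ω) (n : ℕ) (ω : Ω) : 1 ≤ prodOneAdd α n ω :=
  Finset.one_le_prod fun k _ => le_add_of_nonneg_right (hα k ω)

lemma prodOneAdd_pos (hα : ∀ n ω, 0 ≤ α n ω) (n : ℕ) (ω : Ω) : 0 < prodOneAdd α n ω :=
  zero_lt_one.trans_le (one_le_prodOneAdd hα n ω)

lemma prodOneAdd_le_exp_tsum {ω : Ω} (hα : ∀ n, 0 ≤ α n ω) (hsum : Summable fun n => α n ω)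
    (n : ℕ) : prodOneAdd α n ω ≤ Real.exp (∑' k, α k ω) :=
  (Real.prod_one_add_le_exp_sum _ hα).trans
    (Real.exp_le_exp.mpr (hsum.sum_le_tsum _ fun k _ => hα k))

lemma measurable_prodOneAdd {m0 : MeasurableSpace Ω} {ℱ : Filtration ℕ m0} (hα : Adapted ℱ α)
    {n m : ℕ} (hnm : n ≤ m + 1) : Measurable[ℱ m] (prodOneAdd α n) :=
  Finset.measurable_prod _ fun k hk =>
    measurable_const.add (hα.measurable_le (by simp at hk; omega))

end prodOneAdd

section Supermartingale

variable {Ω : Type*} {m0 : MeasurableSpace Ω} {μ : Measure Ω} [IsFiniteMeasure μ]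
  {ℱ : Filtration ℕ m0}

theorem supermartingale_inv_prodOneAdd_mul {W α : ℕ → Ω → ℝ} (hW : Adapted ℱ W)
    (hWint : ∀ n, Integrable (W n) μ) (hα : Adapted ℱ α) (hα0 : ∀ n ω, 0 ≤ α n ω)
    (hcond : ∀ n, μ[W (n + 1) | ℱ n] ≤ᵐ[μ] fun ω => (1 + α n ω) * W n ω) :
    Supermartingale (fun n ω => (prodOneAdd α n ω)⁻¹ * W n ω) ℱ μ := by
  have hinv : ∀ {n m}, n ≤ m + 1 → Measurable[ℱ m] fun ω => (prodOneAdd α n ω)⁻¹ :=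
    fun hnm => (measurable_prodOneAdd hα hnm).inv
  have hint : ∀ n, Integrable (fun ω => (prodOneAdd α n ω)⁻¹ * W n ω) μ := fun n =>
    (hWint n).bdd_mul (c := 1)
      ((hinv (m := n) n.le_succ).mono (ℱ.le n) le_rfl).aestronglyMeasurable (ae_of_all _ fun ω => by
        rw [norm_inv, Real.norm_of_nonneg (prodOneAdd_pos hα0 n ω).le]
        exact inv_le_one_of_one_le₀ (one_le_prodOneAdd hα0 n ω))
  refine supermartingale_nat (fun n => ((hinv n.le_succ).mul (hW n)).stronglyMeasurable) hint
    fun n => ?_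
  -- The normaliser `∏_{k ≤ n} (1 + α k)` is predictable, so it comes out of `μ[· | ℱ n]`.
  have hpull : μ[fun ω => (prodOneAdd α (n + 1) ω)⁻¹ * W (n + 1) ω | ℱ n] =ᵐ[μ]
      fun ω => (prodOneAdd α (n + 1) ω)⁻¹ * μ[W (n + 1) | ℱ n] ω :=
    condExp_mul_of_stronglyMeasurable_left (hinv le_rfl).stronglyMeasurable (hint (n + 1))
      (hWint (n + 1))
  filter_upwards [hpull, hcond n] with ω hpullω hcondω
  have h1α : 0 < 1 + α n ω := by linarith [hα0 n ω]
  calc μ[fun ω => (prodOneAdd α (n + 1) ω)⁻¹ * W (n + 1) ω | ℱ n] ω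
      = (prodOneAdd α (n + 1) ω)⁻¹ * μ[W (n + 1) | ℱ n] ω := hpullω
    _ ≤ (prodOneAdd α (n + 1) ω)⁻¹ * ((1 + α n ω) * W n ω) :=
        mul_le_mul_of_nonneg_left hcondω (inv_nonneg.mpr (prodOneAdd_pos hα0 _ ω).le)
    _ = (prodOneAdd α n ω)⁻¹ * W n ω := by
        rw [prodOneAdd_succ, mul_inv, mul_assoc, inv_mul_cancel_left₀ h1α.ne']

theorem MeasureTheory.Supermartingale.ae_bddAbove_of_nonneg {Z : ℕ → Ω → ℝ}
    (hZ : Supermartingale Z ℱ μ) (hZ0 : ∀ n ω, 0 ≤ Z n ω) :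
    ∀ᵐ ω ∂μ, BddAbove (Set.range fun n => Z n ω) := by
  have hL1 : ∀ n, eLpNorm ((-Z) n) 1 μ ≤ ENNReal.ofReal (∫ ω, Z 0 ω ∂μ) := fun n => by
    rw [Pi.neg_apply, eLpNorm_neg, eLpNorm_one_eq_lintegral_enorm,
      ← ofReal_integral_norm_eq_lintegral_enorm (hZ.integrable n)]
    refine ENNReal.ofReal_le_ofReal ?_
    simp_rw [Real.norm_of_nonneg (hZ0 n _)]
    simpa using hZ.setIntegral_le (Nat.zero_le n) MeasurableSet.univ
  filter_upwards [hZ.neg.exists_ae_tendsto_of_bdd hL1] with ω ⟨c, hc⟩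
  simpa using hc.neg.bddAbove_range

theorem ae_bddAbove_of_condExp_le_one_add_mul {W α : ℕ → Ω → ℝ} (hW : Adapted ℱ W)
    (hWint : ∀ n, Integrable (W n) μ) (hW0 : ∀ n ω, 0 ≤ W n ω) (hα : Adapted ℱ α)
    (hα0 : ∀ n ω, 0 ≤ α n ω) (hαsum : ∀ᵐ ω ∂μ, Summable fun n => α n ω)
    (hcond : ∀ n, μ[W (n + 1) | ℱ n] ≤ᵐ[μ] fun ω => (1 + α n ω) * W n ω) :
    ∀ᵐ ω ∂μ, BddAbove (Set.range fun n => W n ω) := by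
  have hZ := supermartingale_inv_prodOneAdd_mul hW hWint hα hα0 hcond
  have hZ0 : ∀ n ω, 0 ≤ (prodOneAdd α n ω)⁻¹ * W n ω := fun n ω =>
    mul_nonneg (inv_nonneg.mpr (prodOneAdd_pos hα0 n ω).le) (hW0 n ω)
  filter_upwards [hZ.ae_bddAbove_of_nonneg hZ0, hαsum] with ω ⟨C, hC⟩ hsum
  refine ⟨Real.exp (∑' k, α k ω) * C, Set.forall_mem_range.mpr fun n => ?_⟩
  have hp := prodOneAdd_pos hα0 n ω
  calc W n ω = prodOneAdd α n ω * ((prodOneAdd α n ω)⁻¹ * W n ω) := by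
        rw [mul_inv_cancel_left₀ hp.ne']
    _ ≤ Real.exp (∑' k, α k ω) * C :=
        mul_le_mul (prodOneAdd_le_exp_tsum (fun k => hα0 k ω) hsum n) (hC ⟨n, rfl⟩)
          (hZ0 n ω) (Real.exp_pos _).le

/-- A Robbins–Siegmund type boundedness result. -/
theorem ae_bddAbove_of_condExp_le_one_add_mul_add {Y χ η : ℕ → Ω → ℝ} (hY : Adapted ℱ Y)
    (hYint : ∀ n, Integrable (Y n) μ) (hY0 : ∀ n ω, 0 ≤ Y n ω) (hχ : Adapted ℱ χ)
    (hχ0 : ∀ n ω, 0 ≤ χ n ω) (hχsum : ∀ᵐ ω ∂μ, Summable fun n => χ n ω) (hη : Adapted ℱ η)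
    (hη0 : ∀ n ω, 0 ≤ η n ω) (hηsum : ∀ᵐ ω ∂μ, Summable fun n => η n ω)
    (hcond : ∀ n, μ[Y (n + 1) | ℱ n] ≤ᵐ[μ] fun ω => (1 + χ n ω) * Y n ω + η n ω) :
    ∀ᵐ ω ∂μ, BddAbove (Set.range fun n => Y n ω) := by
  -- Shifting `Y` by one absorbs the additive error `η` into the multiplicative one.
  have hcond' : ∀ n, μ[fun ω => Y (n + 1) ω + 1 | ℱ n] ≤ᵐ[μ]
      fun ω => (1 + (χ n ω + η n ω)) * (Y n ω + 1) := fun n => by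
    filter_upwards [condExp_add (hYint (n + 1)) (integrable_const (1 : ℝ)) (ℱ n), hcond n]
      with ω hadd hω
    change μ[Y (n + 1) + fun _ => 1 | ℱ n] ω ≤ _
    rw [hadd, Pi.add_apply, condExp_const (ℱ.le n)]
    nlinarith [hχ0 n ω, mul_nonneg (hη0 n ω) (hY0 n ω)]
  filter_upwards [ae_bddAbove_of_condExp_le_one_add_mul (fun n => (hY n).add_const 1)
    (fun n => (hYint n).add (integrable_const 1)) (fun n ω => by linarith [hY0 n ω])
    (hχ.add hη) (fun n ω => add_nonneg (hχ0 n ω) (hη0 n ω))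
    (by filter_upwards [hχsum, hηsum] with ω h₁ h₂ using h₁.add h₂) hcond'] with ω ⟨C, hC⟩
  exact ⟨C, Set.forall_mem_range.mpr fun n => (le_add_of_nonneg_right zero_le_one).trans
    (hC ⟨n, rfl⟩)⟩

end Supermartingale

lemma Filter.Tendsto.bddAbove_of_bddAbove_image {α β : Type*} [LinearOrder α] [Nonempty α]
    [Preorder β] [NoTopOrder β] {φ : α → β} (hφ : Tendsto φ atTop atTop) {s : Set α}
    (hs : BddAbove (φ '' s)) : BddAbove s := by
  obtain ⟨C, hC⟩ := hs
  obtain ⟨T, hT⟩ := (hφ.eventually_gt_atTop C).exists_forall_of_atTop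
  exact ⟨T, fun t ht => not_lt.mp fun hTt => (hT t hTt.le).not_ge (hC ⟨t, ht, rfl⟩)⟩

lemma MonotoneOn.measurable_comp_of_nonneg {α : Type*} {_ : MeasurableSpace α} {φ : ℝ → ℝ}
    (hφ : MonotoneOn φ (Set.Ici 0)) {f : α → ℝ} (hf : Measurable f) (hf0 : ∀ a, 0 ≤ f a) :
    Measurable fun a => φ (f a) := by
  have hext : Monotone fun t => φ (max t 0) := fun s t hst =>
    hφ (le_max_right s 0) (le_max_right t 0) (max_le_max_right 0 hst)
  simpa only [Function.comp_def, max_eq_left (hf0 _)] using hext.measurable.comp hf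

section sigmaFinSeq

variable {Ω H : Type*} {mΩ : MeasurableSpace Ω} [MeasurableSpace H] {x : ℕ → Ω → H}

lemma measurable_sigmaFinSeq {i n : ℕ} (hin : i ≤ n) : Measurable[sigmaFinSeq x n] (x i) :=
  measurable_iff_comap_le.mpr (le_iSup₂_of_le i hin le_rfl)

noncomputable def sigmaFinSeqFiltration (hx : ∀ n, Measurable (x n)) : Filtration ℕ mΩ where
  seq := sigmaFinSeq x
  mono' _ _ hnm := biSup_mono fun _ hi => le_trans hi hnm
  le' _ := iSup₂_le fun i _ => measurable_iff_comap_le.mp (hx i)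

end sigmaFinSeq

theorem stochastic_quasiFejer_bounded_general
    {H : Type*} [NormedAddCommGroup H] [MeasurableSpace H] [BorelSpace H]
    {Ω : Type*} [MeasurableSpace Ω] (P : Measure Ω) [IsProbabilityMeasure P]
    (F : Set H) (hFne : F.Nonempty)
    (φ : ℝ → ℝ) (hφmono : StrictMonoOn φ (Set.Ici (0 : ℝ)))
    (hφnonneg : ∀ t, 0 ≤ t → 0 ≤ φ t) (hφtop : Tendsto φ atTop atTop)
    (x : ℕ → Ω → H) (hxm : ∀ n, Measurable (x n))
    (χ ϑ η : H → ℕ → Ω → ℝ)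
    (hχnonneg : ∀ z ∈ F, ∀ n, ∀ ω, 0 ≤ χ z n ω)
    (hϑnonneg : ∀ z ∈ F, ∀ n, ∀ ω, 0 ≤ ϑ z n ω)
    (hηnonneg : ∀ z ∈ F, ∀ n, ∀ ω, 0 ≤ η z n ω)
    (hχmeas : ∀ z ∈ F, ∀ n, Measurable[sigmaFinSeq x n] (χ z n))
    (hηmeas : ∀ z ∈ F, ∀ n, Measurable[sigmaFinSeq x n] (η z n))
    (hχsum : ∀ z ∈ F, ∀ᵐ ω ∂P, Summable fun n => χ z n ω)
    (hηsum : ∀ z ∈ F, ∀ᵐ ω ∂P, Summable fun n => η z n ω)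
    (hint : ∀ z ∈ F, ∀ n, Integrable (fun ω => φ ‖x n ω - z‖) P)
    (hineq : ∀ z ∈ F, ∀ᵐ ω ∂P, ∀ n,
      (P[fun ω' => φ ‖x (n + 1) ω' - z‖ | sigmaFinSeq x n]) ω + ϑ z n ω ≤
        (1 + χ z n ω) * φ ‖x n ω - z‖ + η z n ω)
    :
    ∀ᵐ ω ∂P, ∃ C : ℝ, ∀ n, ‖x n ω‖ ≤ C := by
  obtain ⟨z, hz⟩ := hFne
  have hY : Adapted (sigmaFinSeqFiltration hxm) fun n ω => φ ‖x n ω - z‖ := fun n =>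
    hφmono.monotoneOn.measurable_comp_of_nonneg
      ((continuous_norm.comp (continuous_sub_right z)).measurable.comp
        (measurable_sigmaFinSeq le_rfl)) fun _ => norm_nonneg _
  have hcond : ∀ n, P[fun ω => φ ‖x (n + 1) ω - z‖ | sigmaFinSeq x n] ≤ᵐ[P]
      fun ω => (1 + χ z n ω) * φ ‖x n ω - z‖ + η z n ω := fun n => by
    filter_upwards [hineq z hz] with ω hω
    linarith [hω n, hϑnonneg z hz n ω]
  filter_upwards [ae_bddAbove_of_condExp_le_one_add_mul_add hY (hint z hz)
    (fun _ _ => hφnonneg _ (norm_nonneg _)) (hχmeas z hz) (hχnonneg z hz) (hχsum z hz)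
    (hηmeas z hz) (hηnonneg z hz) (hηsum z hz) hcond] with ω hbdd
  obtain ⟨T, hT⟩ := hφtop.bddAbove_of_bddAbove_image (s := Set.range fun n => ‖x n ω - z‖)
    (by rwa [← Set.range_comp])
  exact ⟨T + ‖z‖, fun n => (norm_le_norm_sub_add _ z).trans (by linarith [hT ⟨n, rfl⟩])⟩

theorem stochastic_quasiFejer_bounded
    {H : Type*} [NormedAddCommGroup H] [InnerProductSpace ℝ H] [CompleteSpace H]
    [SecondCountableTopology H] [MeasurableSpace H] [BorelSpace H]
    {Ω : Type*} [MeasurableSpace Ω] (P : Measure Ω) [IsProbabilityMeasure P]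
    (F : Set H) (hFne : F.Nonempty) (hFcl : IsClosed F)
    (φ : ℝ → ℝ) (hφmono : StrictMonoOn φ (Set.Ici (0 : ℝ)))
    (hφnonneg : ∀ t, 0 ≤ t → 0 ≤ φ t) (hφtop : Tendsto φ atTop atTop)
    (x : ℕ → Ω → H) (hxm : ∀ n, Measurable (x n))
    (χ ϑ η : H → ℕ → Ω → ℝ)
    (hχnonneg : ∀ z ∈ F, ∀ n, ∀ ω, 0 ≤ χ z n ω)
    (hϑnonneg : ∀ z ∈ F, ∀ n, ∀ ω, 0 ≤ ϑ z n ω)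
    (hηnonneg : ∀ z ∈ F, ∀ n, ∀ ω, 0 ≤ η z n ω)
    (hχmeas : ∀ z ∈ F, ∀ n, Measurable[sigmaFinSeq x n] (χ z n))
    (hϑmeas : ∀ z ∈ F, ∀ n, Measurable[sigmaFinSeq x n] (ϑ z n))
    (hηmeas : ∀ z ∈ F, ∀ n, Measurable[sigmaFinSeq x n] (η z n))
    (hχsum : ∀ z ∈ F, ∀ᵐ ω ∂P, Summable fun n => χ z n ω)
    (hηsum : ∀ z ∈ F, ∀ᵐ ω ∂P, Summable fun n => η z n ω)
    (hint : ∀ z ∈ F, ∀ n, Integrable (fun ω => φ ‖x n ω - z‖) P)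
    (hineq : ∀ z ∈ F, ∀ᵐ ω ∂P, ∀ n,
      (P[fun ω' => φ ‖x (n + 1) ω' - z‖ | sigmaFinSeq x n]) ω + ϑ z n ω ≤
        (1 + χ z n ω) * φ ‖x n ω - z‖ + η z n ω)
    :
    ∀ᵐ ω ∂P, ∃ C : ℝ, ∀ n, ‖x n ω‖ ≤ C :=
  stochastic_quasiFejer_bounded_general P F hFne φ hφmono hφnonneg hφtop x hxm χ ϑ η hχnonneg
    hϑnonneg hηnonneg hχmeas hηmeas hχsum hηsum hint hineq
end

section
/- Suppose that for every z ∈ F the stochastic quasi-Fejér inequality E[φ(‖x_{n+1} − z‖) | 𝓧_n] + ϑ_n(z) ≤ (1 + χ_n(z)) φ(‖x_n − z‖) + η_n(z) holds P-a.s. for every n ∈ ℕ. Then there exists an event Ω̃ ∈ 𝓕 with P(Ω̃) = 1 such that, for every ω ∈ Ω̃ and every z ∈ F, the real sequence (‖x_n(ω) − z‖)_{n∈ℕ} converges. -/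
open MeasureTheory Filter Topology
open scoped RealInnerProductSpace

/-!
For fixed `z ∈ F`, `Y n = φ ‖x n - z‖` satisfies the Robbins–Siegmund inequality
`E[Y (n+1) | 𝓧 n] ≤ (1 + χ n) Y n + η n` (drop `ϑ ≥ 0`), hence converges almost surely:
`Y n / ∏_{k<n} (1 + χ k)` minus the accumulated discounted `η k` is a supermartingale up to
integrability, and freezing it once `∑ η k` exceeds a level `M` makes it an integrable
supermartingale bounded below by `-M`, so it converges; on `{∑ η k ≤ M}` nothing is frozen.
As `φ` is strictly increasing and unbounded on `[0, ∞)`, `‖x n - z‖` converges as well.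
Finally, the null sets are united over a countable dense subset of `F` only: since
`z ↦ ‖x n ω - z‖` is `1`-Lipschitz uniformly in `n`, the set of `z` for which it is a
Cauchy sequence is closed.
-/

theorem exists_tendsto_of_tendsto_comp_strictMonoOn {ι : Type*} {L : Filter ι} [L.NeBot]
    {φ : ℝ → ℝ} (hφ : StrictMonoOn φ (Set.Ici 0)) (hφtop : Tendsto φ atTop atTop)
    {t : ι → ℝ} (ht : ∀ i, 0 ≤ t i) {l : ℝ} (h : Tendsto (fun i => φ (t i)) L (𝓝 l)) :
    ∃ c, Tendsto t L (𝓝 c) := by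
  obtain ⟨B, hB⟩ := (tendsto_atTop.1 hφtop (l + 1)).exists_forall_of_atTop
  have hbdd : IsBoundedUnder (· ≤ ·) L t := by
    refine isBoundedUnder_of_eventually_le (a := B) ?_
    filter_upwards [h.eventually_lt_const (lt_add_one l)] with i hi
    exact le_of_not_ge fun hBi => (hB _ hBi).not_gt hi
  have hbdd' : IsBoundedUnder (· ≥ ·) L t := isBoundedUnder_of_eventually_ge (.of_forall ht)
  refine ⟨limsup t L, tendsto_of_liminf_eq_limsup ?_ rfl hbdd hbdd'⟩
  refine le_antisymm (liminf_le_limsup hbdd hbdd') (le_of_not_gt fun hlt => ?_)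
  obtain ⟨u, hu, huv⟩ := exists_between hlt
  obtain ⟨v, huv, hv⟩ := exists_between huv
  have hu0 : 0 ≤ u := (le_liminf_of_le hbdd.isCoboundedUnder_ge (.of_forall ht)).trans hu.le
  -- `φ ∘ t` is frequently below `φ u` and frequently above `φ v > φ u`, yet tends to `l`
  have hlu : l ≤ φ u := h.liminf_eq ▸ liminf_le_of_frequently_le
    ((frequently_lt_of_liminf_lt hbdd.isCoboundedUnder_ge hu).mono
      fun i hi => (hφ (ht i) hu0 hi).le) h.isBoundedUnder_ge
  have hvl : φ v ≤ l := h.limsup_eq ▸ le_limsup_of_frequently_le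
    ((frequently_lt_of_lt_limsup hbdd'.isCoboundedUnder_le hv).mono
      fun i hi => (hφ (hu0.trans huv.le) (ht i) hi).le) h.isBoundedUnder_le
  exact (hφ hu0 (hu0.trans huv.le) huv).not_ge (hvl.trans hlu)

theorem isClosed_setOf_cauchySeq_dist {α ι : Type*} [PseudoMetricSpace α] [Nonempty ι]
    [SemilatticeSup ι] (u : ι → α) : IsClosed {z | CauchySeq fun i => dist (u i) z} := by
  refine isClosed_of_closure_subset fun z hz => Metric.cauchySeq_iff'.2 fun ε hε => ?_
  obtain ⟨z', hz', hzz'⟩ := Metric.mem_closure_iff.1 hz (ε / 3) (by positivity)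
  obtain ⟨N, hN⟩ := Metric.cauchySeq_iff'.1 hz' (ε / 3) (by positivity)
  refine ⟨N, fun n hn => ?_⟩
  have hclose : ∀ i, |dist (u i) z - dist (u i) z'| ≤ dist z z' := fun i => by
    simpa only [dist_comm (u i)] using abs_dist_sub_le z z' (u i)
  have h₁ := abs_le.1 (hclose n)
  have h₂ := abs_le.1 (hclose N)
  have h₃ := abs_lt.1 (hN n hn)
  rw [Real.dist_eq, abs_lt]
  constructor <;> linarith [h₁.1, h₁.2, h₂.1, h₂.2, h₃.1, h₃.2]

theorem ae_forall_mem_exists_tendsto_dist {α Ω : Type*} [PseudoMetricSpace α]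
    [TopologicalSpace.SeparableSpace α] {mΩ : MeasurableSpace Ω} {μ : Measure Ω} {F : Set α}
    {x : ℕ → Ω → α} (h : ∀ z ∈ F, ∀ᵐ ω ∂μ, ∃ l, Tendsto (fun n => dist (x n ω) z) atTop (𝓝 l)) :
    ∀ᵐ ω ∂μ, ∀ z ∈ F, ∃ l, Tendsto (fun n => dist (x n ω) z) atTop (𝓝 l) := by
  obtain ⟨D, hDF, hDc, hFD⟩ :=
    (TopologicalSpace.IsSeparable.of_separableSpace F).exists_countable_dense_subset
  have hD : ∀ᵐ ω ∂μ, ∀ z ∈ D, CauchySeq fun n => dist (x n ω) z :=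
    (ae_ball_iff hDc).2 fun z hz => by
      filter_upwards [h z (hDF hz)] with ω ⟨l, hl⟩ using hl.cauchySeq
  filter_upwards [hD] with ω hω z hz
  exact cauchySeq_tendsto_of_complete
    (closure_minimal hω (isClosed_setOf_cauchySeq_dist _) (hFD hz))

theorem measurable_comp_of_monotoneOn_Ici {α : Type*} {mα : MeasurableSpace α} {φ : ℝ → ℝ}
    (hφ : MonotoneOn φ (Set.Ici 0)) {f : α → ℝ} (hf : Measurable f) (hf0 : ∀ a, 0 ≤ f a) :
    Measurable fun a => φ (f a) := by
  have hmono : Monotone fun t => φ (max t 0) := fun s t hst =>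
    hφ (le_max_right s 0) (le_max_right t 0) (max_le_max_right 0 hst)
  simpa only [Function.comp_def, max_eq_left (hf0 _)] using hmono.measurable.comp hf

theorem MeasureTheory.Supermartingale.exists_ae_tendsto_of_forall_le {Ω : Type*}
    {m0 : MeasurableSpace Ω} {μ : Measure Ω} [IsFiniteMeasure μ] {ℱ : Filtration ℕ m0}
    {f : ℕ → Ω → ℝ} (hf : Supermartingale f ℱ μ) {c : ℝ} (hc : ∀ n ω, c ≤ f n ω) :
    ∀ᵐ ω ∂μ, ∃ l, Tendsto (fun n => f n ω) atTop (𝓝 l) := by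
  set g := f - fun _ _ => c
  have hg : Supermartingale g ℱ μ := hf.sub_martingale (martingale_const ℱ μ c)
  have hg0 : ∀ n ω, 0 ≤ g n ω := fun n ω => sub_nonneg.2 (hc n ω)
  have hbdd : ∀ n, eLpNorm ((-g) n) 1 μ ≤ ENNReal.ofReal (∫ ω, g 0 ω ∂μ) := fun n => by
    have hint : ∫ ω, g n ω ∂μ ≤ ∫ ω, g 0 ω ∂μ := by
      simpa only [setIntegral_univ] using hg.setIntegral_le n.zero_le MeasurableSet.univ
    rw [Pi.neg_apply, eLpNorm_neg, eLpNorm_one_eq_lintegral_enorm]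
    simp_rw [Real.enorm_of_nonneg (hg0 n _)]
    rw [← ofReal_integral_eq_lintegral_ofReal (hg.integrable n) (.of_forall (hg0 n))]
    exact ENNReal.ofReal_le_ofReal hint
  filter_upwards [hg.neg.exists_ae_tendsto_of_bdd hbdd] with ω ⟨l, hl⟩
  refine ⟨c - l, (tendsto_const_nhds.sub hl).congr fun n => ?_⟩
  simp [g]

theorem condExp_mul_sub_nonpos {Ω : Type*} {m m0 : MeasurableSpace Ω} {μ : Measure Ω}
    (hm : m ≤ m0) [SigmaFinite (μ.trim hm)] {g X R : Ω → ℝ} {C : ℝ} (hg : StronglyMeasurable[m] g)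
    (hg0 : 0 ≤ g) (hgC : ∀ ω, g ω ≤ C) (hR : StronglyMeasurable[m] R) (hX : Integrable X μ)
    (hgXR : Integrable (g * (X - R)) μ) (hXR : μ[X|m] ≤ᵐ[μ] R) :
    μ[g * (X - R)|m] ≤ᵐ[μ] 0 := by
  have hgX : Integrable (g * X) μ := hX.bdd_mul (hg.mono hm).aestronglyMeasurable
    (.of_forall fun ω => by rw [Real.norm_of_nonneg (hg0 ω)]; exact hgC ω)
  have hgR : Integrable (g * R) μ := by
    convert hgX.sub hgXR using 1; ring
  rw [mul_sub]
  filter_upwards [condExp_sub hgX hgR m, condExp_mul_of_stronglyMeasurable_left hg hgX hX, hXR]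
    with ω hsub hmul hle
  rw [hsub, Pi.sub_apply, hmul, condExp_of_stronglyMeasurable hm (hg.mul hR) hgR]
  simpa only [Pi.mul_apply, Pi.zero_apply, sub_nonpos] using
    mul_le_mul_of_nonneg_left hle (hg0 ω)

namespace RobbinsSiegmund

open Finset

variable {Ω : Type*}

noncomputable def discount (a : ℕ → Ω → ℝ) (n : ℕ) (ω : Ω) : ℝ := ∏ k ∈ range n, (1 + a k ω)

/-- Under `E[Y (n+1) | ℱ n] ≤ (1 + a n) Y n + b n` this has nonpositive conditional increments. -/
noncomputable def compensated (Y a b : ℕ → Ω → ℝ) (n : ℕ) (ω : Ω) : ℝ :=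
  Y n ω / discount a n ω - ∑ k ∈ range n, b k ω / discount a (k + 1) ω

def withinBudget (b : ℕ → Ω → ℝ) (M : ℝ) (n : ℕ) : Set Ω := {ω | ∑ k ∈ range n, b k ω ≤ M}

/-- `compensated Y a b`, frozen from the first time `∑_{k ≤ n} b k` exceeds `M`. -/
noncomputable def stopped (Y a b : ℕ → Ω → ℝ) (M : ℝ) (n : ℕ) : Ω → ℝ :=
  Y 0 + ∑ k ∈ range n,
    (withinBudget b M (k + 1)).indicator (compensated Y a b (k + 1) - compensated Y a b k)

variable {Y a b : ℕ → Ω → ℝ} {M : ℝ}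

theorem one_le_discount (ha : ∀ n ω, 0 ≤ a n ω) (n : ℕ) (ω : Ω) : 1 ≤ discount a n ω :=
  one_le_prod fun k _ => le_add_of_nonneg_right (ha k ω)

theorem discount_pos (ha : ∀ n ω, 0 ≤ a n ω) (n : ℕ) (ω : Ω) : 0 < discount a n ω :=
  zero_lt_one.trans_le (one_le_discount ha n ω)

theorem discount_succ (n : ℕ) (ω : Ω) : discount a (n + 1) ω = discount a n ω * (1 + a n ω) :=
  prod_range_succ _ n

theorem compensated_zero : compensated Y a b 0 = Y 0 := by
  ext ω; simp [compensated, discount]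

theorem compensated_succ_sub (ha : ∀ n ω, 0 ≤ a n ω) (n : ℕ) (ω : Ω) :
    compensated Y a b (n + 1) ω - compensated Y a b n ω =
      (Y (n + 1) ω - ((1 + a n ω) * Y n ω + b n ω)) / discount a (n + 1) ω := by
  have hC := (discount_pos ha n ω).ne'
  have ha' : 1 + a n ω ≠ 0 := by linarith [ha n ω]
  simp only [compensated, sum_range_succ, discount_succ]
  field_simp
  ring

theorem withinBudget_succ_subset (hb : ∀ n ω, 0 ≤ b n ω) (n : ℕ) :
    withinBudget b M (n + 1) ⊆ withinBudget b M n := fun ω hω =>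
  (sum_le_sum_of_subset_of_nonneg (range_subset_range.2 n.le_succ) fun k _ _ => hb k ω).trans hω

theorem antitone_withinBudget (hb : ∀ n ω, 0 ≤ b n ω) : Antitone (withinBudget b M) :=
  antitone_nat_of_succ_le (withinBudget_succ_subset hb)

theorem stopped_succ (n : ℕ) : stopped Y a b M (n + 1) = stopped Y a b M n +
    (withinBudget b M (n + 1)).indicator (compensated Y a b (n + 1) - compensated Y a b n) := by
  rw [stopped, stopped, sum_range_succ, add_assoc]

theorem stopped_eq_compensated (hb : ∀ n ω, 0 ≤ b n ω) {n : ℕ} {ω : Ω}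
    (hω : ω ∈ withinBudget b M n) : stopped Y a b M n ω = compensated Y a b n ω := by
  have hmem : ∀ k ∈ range n, ω ∈ withinBudget b M (k + 1) := fun k hk =>
    antitone_withinBudget hb (mem_range.1 hk) hω
  simp only [stopped, Pi.add_apply, Finset.sum_apply]
  rw [sum_congr rfl fun k hk => Set.indicator_of_mem (hmem k hk) _]
  simp only [Pi.sub_apply]
  rw [sum_range_sub (fun k => compensated Y a b k ω), compensated_zero]
  ring

theorem neg_le_compensated_of_mem (ha : ∀ n ω, 0 ≤ a n ω) (hb : ∀ n ω, 0 ≤ b n ω)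
    (hY : ∀ n ω, 0 ≤ Y n ω) {n : ℕ} {ω : Ω} (hω : ω ∈ withinBudget b M n) :
    -M ≤ compensated Y a b n ω := by
  have hdisc : ∑ k ∈ range n, b k ω / discount a (k + 1) ω ≤ M :=
    (sum_le_sum fun k _ => div_le_self (hb k ω) (one_le_discount ha _ ω)).trans hω
  have := div_nonneg (hY n ω) (discount_pos ha n ω).le
  rw [compensated]; linarith

theorem neg_le_stopped (ha : ∀ n ω, 0 ≤ a n ω) (hb : ∀ n ω, 0 ≤ b n ω)
    (hY : ∀ n ω, 0 ≤ Y n ω) (hM : 0 ≤ M) (n : ℕ) (ω : Ω) : -M ≤ stopped Y a b M n ω := by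
  induction n with
  | zero => simpa [stopped] using (neg_nonpos.2 hM).trans (hY 0 ω)
  | succ n ih =>
    by_cases hω : ω ∈ withinBudget b M (n + 1)
    · rw [stopped_eq_compensated hb hω]
      exact neg_le_compensated_of_mem ha hb hY hω
    · rw [stopped_succ, Pi.add_apply, Set.indicator_of_notMem hω, add_zero]
      exact ih

theorem abs_indicator_compensated_sub_le (ha : ∀ n ω, 0 ≤ a n ω) (hb : ∀ n ω, 0 ≤ b n ω)
    (hY : ∀ n ω, 0 ≤ Y n ω) (hM : 0 ≤ M) (n : ℕ) (ω : Ω) :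
    |(withinBudget b M (n + 1)).indicator
      (compensated Y a b (n + 1) - compensated Y a b n) ω| ≤ Y (n + 1) ω + Y n ω + M := by
  by_cases hω : ω ∈ withinBudget b M (n + 1)
  · have hbM : b n ω ≤ M :=
      (single_le_sum (fun k _ => hb k ω) (self_mem_range_succ n)).trans hω
    rw [Set.indicator_of_mem hω, Pi.sub_apply, compensated, compensated, sum_range_succ, abs_le]
    have h₁ := div_le_self (hY (n + 1) ω) (one_le_discount ha (n + 1) ω)
    have h₂ := div_le_self (hY n ω) (one_le_discount ha n ω)
    have h₃ := div_le_self (hb n ω) (one_le_discount ha (n + 1) ω)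
    have h₄ := div_nonneg (hY (n + 1) ω) (discount_pos ha (n + 1) ω).le
    have h₅ := div_nonneg (hY n ω) (discount_pos ha n ω).le
    have h₆ := div_nonneg (hb n ω) (discount_pos ha (n + 1) ω).le
    constructor <;> linarith [hY n ω, hY (n + 1) ω]
  · rw [Set.indicator_of_notMem hω, abs_zero]
    linarith [hY n ω, hY (n + 1) ω]

variable {m0 : MeasurableSpace Ω} {ℱ : Filtration ℕ m0} {P : Measure Ω}

theorem measurable_discount {m : MeasurableSpace Ω} {n : ℕ} (ha : ∀ k < n, Measurable[m] (a k)) :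
    Measurable[m] (discount a n) :=
  Finset.measurable_prod _ fun k hk => measurable_const.add (ha k (mem_range.1 hk))

theorem adapted_compensated (hY : Adapted ℱ Y) (ha : Adapted ℱ a) (hb : Adapted ℱ b) :
    Adapted ℱ (compensated Y a b) := fun n => by
  have hdisc : ∀ k ≤ n, Measurable[ℱ n] (discount a k) := fun k hk =>
    measurable_discount fun i hi => (ha i).mono (ℱ.mono (by omega)) le_rfl
  refine (hY n).div (hdisc n le_rfl) |>.sub <| Finset.measurable_sum _ fun k hk => ?_
  have hk : k + 1 ≤ n := mem_range.1 hk
  exact ((hb k).mono (ℱ.mono (by omega)) le_rfl).div (hdisc (k + 1) hk)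

theorem measurableSet_withinBudget (hb : Adapted ℱ b) (n : ℕ) :
    MeasurableSet[ℱ n] (withinBudget b M (n + 1)) :=
  measurableSet_le (Finset.measurable_sum _ fun k hk =>
    (hb k).mono (ℱ.mono (Nat.lt_succ_iff.1 (mem_range.1 hk))) le_rfl) measurable_const

theorem measurable_indicator_compensated_sub (hY : Adapted ℱ Y) (ha : Adapted ℱ a)
    (hb : Adapted ℱ b) (n : ℕ) : Measurable[ℱ (n + 1)]
      ((withinBudget b M (n + 1)).indicator (compensated Y a b (n + 1) - compensated Y a b n)) :=
  have hV := adapted_compensated hY ha hb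
  ((hV (n + 1)).sub ((hV n).mono (ℱ.mono n.le_succ) le_rfl)).indicator
    (ℱ.mono n.le_succ _ (measurableSet_withinBudget hb n))

theorem adapted_stopped (hY : Adapted ℱ Y) (ha : Adapted ℱ a) (hb : Adapted ℱ b) :
    Adapted ℱ (stopped Y a b M) := fun n => by
  refine ((hY 0).mono (ℱ.mono n.zero_le) le_rfl).add ?_
  rw [Finset.sum_fn]
  exact Finset.measurable_sum _ fun k hk =>
    (measurable_indicator_compensated_sub hY ha hb k).mono (ℱ.mono (mem_range.1 hk)) le_rfl

theorem integrable_stopped [IsFiniteMeasure P] (hY : Adapted ℱ Y) (ha : Adapted ℱ a)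
    (hb : Adapted ℱ b) (ha0 : ∀ n ω, 0 ≤ a n ω) (hb0 : ∀ n ω, 0 ≤ b n ω)
    (hY0 : ∀ n ω, 0 ≤ Y n ω) (hM : 0 ≤ M) (hYint : ∀ n, Integrable (Y n) P) (n : ℕ) :
    Integrable (stopped Y a b M n) P := by
  refine (hYint 0).add (integrable_finsetSum' _ fun k _ => ?_)
  refine (((hYint (k + 1)).add (hYint k)).add (integrable_const M)).mono'
    ((measurable_indicator_compensated_sub hY ha hb k).mono (ℱ.le _) le_rfl).aestronglyMeasurable
    (.of_forall fun ω => ?_)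
  simpa only [Real.norm_eq_abs, Pi.add_apply] using
    abs_indicator_compensated_sub_le ha0 hb0 hY0 hM k ω

theorem supermartingale_stopped [IsFiniteMeasure P] (hY : Adapted ℱ Y) (ha : Adapted ℱ a)
    (hb : Adapted ℱ b) (ha0 : ∀ n ω, 0 ≤ a n ω) (hb0 : ∀ n ω, 0 ≤ b n ω)
    (hY0 : ∀ n ω, 0 ≤ Y n ω) (hM : 0 ≤ M) (hYint : ∀ n, Integrable (Y n) P)
    (hineq : ∀ n, P[Y (n + 1)|ℱ n] ≤ᵐ[P] fun ω => (1 + a n ω) * Y n ω + b n ω) :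
    Supermartingale (stopped Y a b M) ℱ P := by
  have hint := integrable_stopped hY ha hb ha0 hb0 hY0 hM hYint
  refine supermartingale_of_condExp_sub_nonneg_nat (adapted_stopped hY ha hb).stronglyAdapted
    hint fun n => ?_
  set g := (withinBudget b M (n + 1)).indicator fun ω => (discount a (n + 1) ω)⁻¹
  set R := fun ω => (1 + a n ω) * Y n ω + b n ω
  have hstep : stopped Y a b M (n + 1) - stopped Y a b M n = g * (Y (n + 1) - R) := by
    ext ω
    rw [stopped_succ, add_sub_cancel_left]
    by_cases hω : ω ∈ withinBudget b M (n + 1)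
    · simp [g, R, hω, compensated_succ_sub ha0, div_eq_inv_mul]
    · simp [g, hω]
  have hg : StronglyMeasurable[ℱ n] g := ((measurable_discount fun k hk =>
    (ha k).mono (ℱ.mono (Nat.lt_succ_iff.1 hk)) le_rfl).inv.indicator
      (measurableSet_withinBudget hb n)).stronglyMeasurable
  have hR : StronglyMeasurable[ℱ n] R :=
    (((measurable_const.add (ha n)).mul (hY n)).add (hb n)).stronglyMeasurable
  have hg0 : 0 ≤ g := Set.indicator_nonneg fun ω _ => inv_nonneg.2 (discount_pos ha0 _ ω).le
  have hg1 : ∀ ω, g ω ≤ 1 := fun ω => Set.indicator_apply_le'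
    (fun _ => inv_le_one_of_one_le₀ (one_le_discount ha0 _ _)) fun _ => zero_le_one
  have hle := condExp_mul_sub_nonpos (ℱ.le n) hg hg0 hg1 hR (hYint (n + 1))
    (hstep ▸ (hint (n + 1)).sub (hint n)) (hineq n)
  rw [← neg_sub, hstep]
  filter_upwards [condExp_neg (g * (Y (n + 1) - R)) (ℱ n), hle] with ω hneg hnonpos
  rw [hneg]
  exact neg_nonneg.2 hnonpos

theorem ae_exists_tendsto [IsFiniteMeasure P] (hY : Adapted ℱ Y) (ha : Adapted ℱ a)
    (hb : Adapted ℱ b) (ha0 : ∀ n ω, 0 ≤ a n ω) (hb0 : ∀ n ω, 0 ≤ b n ω)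
    (hY0 : ∀ n ω, 0 ≤ Y n ω) (hYint : ∀ n, Integrable (Y n) P)
    (hasum : ∀ᵐ ω ∂P, Summable fun n => a n ω) (hbsum : ∀ᵐ ω ∂P, Summable fun n => b n ω)
    (hineq : ∀ n, P[Y (n + 1)|ℱ n] ≤ᵐ[P] fun ω => (1 + a n ω) * Y n ω + b n ω) :
    ∀ᵐ ω ∂P, ∃ l, Tendsto (fun n => Y n ω) atTop (𝓝 l) := by
  have hstopped : ∀ M : ℕ, ∀ᵐ ω ∂P, ∃ l, Tendsto (fun n => stopped Y a b M n ω) atTop (𝓝 l) :=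
    fun M => (supermartingale_stopped hY ha hb ha0 hb0 hY0 M.cast_nonneg hYint hineq)
      |>.exists_ae_tendsto_of_forall_le (neg_le_stopped ha0 hb0 hY0 M.cast_nonneg)
  filter_upwards [ae_all_iff.2 hstopped, hasum, hbsum] with ω hU hsa hsb
  -- once the budget exceeds `∑ b`, the stopped process is never frozen
  obtain ⟨M, hM⟩ := exists_nat_ge (∑' n, b n ω)
  obtain ⟨v, hv⟩ := hU M
  have hV : Tendsto (fun n => compensated Y a b n ω) atTop (𝓝 v) := hv.congr fun n =>
    stopped_eq_compensated hb0 ((hsb.sum_le_tsum _ fun k _ => hb0 k ω).trans hM)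
  have hC := (Real.multipliable_one_add_of_summable hsa).hasProd.tendsto_prod_nat
  have hE := (hsb.of_nonneg_of_le (fun k => div_nonneg (hb0 k ω) (discount_pos ha0 (k + 1) ω).le)
    fun k => div_le_self (hb0 k ω) (one_le_discount ha0 (k + 1) ω)).hasSum.tendsto_sum_nat
  refine ⟨_, ((hV.add hE).mul hC).congr fun n => ?_⟩
  rw [compensated, sub_add_cancel, ← discount, div_mul_cancel₀ _ (discount_pos ha0 n ω).ne']

end RobbinsSiegmund

theorem stochastic_quasiFejer_dist_converges_general
    {H : Type*} [NormedAddCommGroup H]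
    [SecondCountableTopology H] [MeasurableSpace H] [BorelSpace H]
    {Ω : Type*} [MeasurableSpace Ω] (P : Measure Ω) [IsProbabilityMeasure P]
    (F : Set H)
    (φ : ℝ → ℝ) (hφmono : StrictMonoOn φ (Set.Ici (0 : ℝ)))
    (hφnonneg : ∀ t, 0 ≤ t → 0 ≤ φ t) (hφtop : Tendsto φ atTop atTop)
    (x : ℕ → Ω → H) (hxm : ∀ n, Measurable (x n))
    (χ ϑ η : H → ℕ → Ω → ℝ)
    (hχnonneg : ∀ z ∈ F, ∀ n, ∀ ω, 0 ≤ χ z n ω)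
    (hϑnonneg : ∀ z ∈ F, ∀ n, ∀ ω, 0 ≤ ϑ z n ω)
    (hηnonneg : ∀ z ∈ F, ∀ n, ∀ ω, 0 ≤ η z n ω)
    (hχmeas : ∀ z ∈ F, ∀ n, Measurable[sigmaFinSeq x n] (χ z n))
    (hηmeas : ∀ z ∈ F, ∀ n, Measurable[sigmaFinSeq x n] (η z n))
    (hχsum : ∀ z ∈ F, ∀ᵐ ω ∂P, Summable fun n => χ z n ω)
    (hηsum : ∀ z ∈ F, ∀ᵐ ω ∂P, Summable fun n => η z n ω)
    (hint : ∀ z ∈ F, ∀ n, Integrable (fun ω => φ ‖x n ω - z‖) P)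
    (hineq : ∀ z ∈ F, ∀ᵐ ω ∂P, ∀ n,
      (P[fun ω' => φ ‖x (n + 1) ω' - z‖ | sigmaFinSeq x n]) ω + ϑ z n ω ≤
        (1 + χ z n ω) * φ ‖x n ω - z‖ + η z n ω)
    :
    ∃ Ωt : Set Ω, MeasurableSet Ωt ∧ P Ωt = 1 ∧
      ∀ ω ∈ Ωt, ∀ z ∈ F, ∃ l : ℝ,
        Tendsto (fun n => ‖x n ω - z‖) atTop (𝓝 l) := by
  have hxsm : ∀ n, StronglyMeasurable (x n) := fun n => (hxm n).stronglyMeasurable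
  have hconv : ∀ z ∈ F, ∀ᵐ ω ∂P, ∃ l, Tendsto (fun n => dist (x n ω) z) atTop (𝓝 l) := by
    intro z hz
    have hY : Adapted (Filtration.natural x hxsm) fun n ω => φ ‖x n ω - z‖ := fun n =>
      measurable_comp_of_monotoneOn_Ici hφmono.monotoneOn
        ((continuous_norm.comp (continuous_sub_right z)).measurable.comp
          ((Filtration.stronglyAdapted_natural hxsm).adapted n))
        fun _ => norm_nonneg _
    have hineq' : ∀ n, P[fun ω => φ ‖x (n + 1) ω - z‖|sigmaFinSeq x n] ≤ᵐ[P]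
        fun ω => (1 + χ z n ω) * φ ‖x n ω - z‖ + η z n ω := fun n => by
      filter_upwards [hineq z hz] with ω hω
      exact (le_add_of_nonneg_right (hϑnonneg z hz n ω)).trans (hω n)
    filter_upwards [RobbinsSiegmund.ae_exists_tendsto hY (hχmeas z hz) (hηmeas z hz)
      (hχnonneg z hz) (hηnonneg z hz) (fun n ω => hφnonneg _ (norm_nonneg _)) (hint z hz)
      (hχsum z hz) (hηsum z hz) hineq'] with ω ⟨l, hl⟩
    simpa only [dist_eq_norm] using
      exists_tendsto_of_tendsto_comp_strictMonoOn hφmono hφtop (fun n => norm_nonneg _) hl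
  obtain ⟨Ωt, hΩt, hmeas, hconvΩt⟩ :=
    (ae_forall_mem_exists_tendsto_dist hconv).exists_measurable_mem
  refine ⟨Ωt, hmeas, (prob_compl_eq_zero_iff hmeas).1 (mem_ae_iff.1 hΩt), fun ω hω z hz => ?_⟩
  simpa only [dist_eq_norm] using hconvΩt ω hω z hz

theorem stochastic_quasiFejer_dist_converges
    {H : Type*} [NormedAddCommGroup H] [InnerProductSpace ℝ H] [CompleteSpace H]
    [SecondCountableTopology H] [MeasurableSpace H] [BorelSpace H]
    {Ω : Type*} [MeasurableSpace Ω] (P : Measure Ω) [IsProbabilityMeasure P]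
    (F : Set H) (hFne : F.Nonempty) (hFcl : IsClosed F)
    (φ : ℝ → ℝ) (hφmono : StrictMonoOn φ (Set.Ici (0 : ℝ)))
    (hφnonneg : ∀ t, 0 ≤ t → 0 ≤ φ t) (hφtop : Tendsto φ atTop atTop)
    (x : ℕ → Ω → H) (hxm : ∀ n, Measurable (x n))
    (χ ϑ η : H → ℕ → Ω → ℝ)
    (hχnonneg : ∀ z ∈ F, ∀ n, ∀ ω, 0 ≤ χ z n ω)
    (hϑnonneg : ∀ z ∈ F, ∀ n, ∀ ω, 0 ≤ ϑ z n ω)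
    (hηnonneg : ∀ z ∈ F, ∀ n, ∀ ω, 0 ≤ η z n ω)
    (hχmeas : ∀ z ∈ F, ∀ n, Measurable[sigmaFinSeq x n] (χ z n))
    (hϑmeas : ∀ z ∈ F, ∀ n, Measurable[sigmaFinSeq x n] (ϑ z n))
    (hηmeas : ∀ z ∈ F, ∀ n, Measurable[sigmaFinSeq x n] (η z n))
    (hχsum : ∀ z ∈ F, ∀ᵐ ω ∂P, Summable fun n => χ z n ω)
    (hηsum : ∀ z ∈ F, ∀ᵐ ω ∂P, Summable fun n => η z n ω)
    (hint : ∀ z ∈ F, ∀ n, Integrable (fun ω => φ ‖x n ω - z‖) P)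
    (hineq : ∀ z ∈ F, ∀ᵐ ω ∂P, ∀ n,
      (P[fun ω' => φ ‖x (n + 1) ω' - z‖ | sigmaFinSeq x n]) ω + ϑ z n ω ≤
        (1 + χ z n ω) * φ ‖x n ω - z‖ + η z n ω)
    :
    ∃ Ωt : Set Ω, MeasurableSet Ωt ∧ P Ωt = 1 ∧
      ∀ ω ∈ Ωt, ∀ z ∈ F, ∃ l : ℝ,
        Tendsto (fun n => ‖x n ω - z‖) atTop (𝓝 l) :=
  stochastic_quasiFejer_dist_converges_general P F φ hφmono hφnonneg hφtop x hxm χ ϑ η hχnonneg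
    hϑnonneg hηnonneg hχmeas hηmeas hχsum hηsum hint hineq
end

section
/- Suppose that for every z ∈ F the stochastic quasi-Fejér inequality E[φ(‖x_{n+1} − z‖) | 𝓧_n] + ϑ_n(z) ≤ (1 + χ_n(z)) φ(‖x_n − z‖) + η_n(z) holds P-a.s. for every n ∈ ℕ, that P-almost surely (x_n)_{n∈ℕ} has at least one strong sequential cluster point, and that P-almost surely every weak sequential cluster point of (x_n)_{n∈ℕ} belongs to F. Then (x_n)_{n∈ℕ} converges strongly (in norm) P-almost surely to an F-valued random variable. -/
/-! For every `z ∈ F` the Robbins–Siegmund theorem turns the quasi-Fejér inequality into almost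
sure convergence of `φ ‖x n - z‖`. As `φ` is strictly increasing and a subsequence of `x n`
converges strongly to some `p`, this forces `‖x n - z‖ → ‖p - z‖`. Since `p` is also a weak
cluster point, `p ∈ F`; applying the above to a countable dense subset of `F`, whose points come
arbitrarily close to `p`, gives `x n → p` almost surely.

Robbins–Siegmund: dividing by `∏ k < n, (1 + χ k)` reduces to `χ = 0`, where
`U n - ∑ k < n, β k` is a supermartingale. It need not be integrable nor bounded below, but
stopped before `∑ β` exceeds a level `c` it is both, hence converges; almost surely `∑ β` stays
below some integer level, at which the process is never stopped. -/

open MeasureTheory Filter Topology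
open scoped RealInnerProductSpace

lemma tendsto_of_strictMonoOn_comp_of_subseq {φ : ℝ → ℝ} (hφ : StrictMonoOn φ (Set.Ici 0))
    {a : ℕ → ℝ} (ha : ∀ n, 0 ≤ a n) {L l : ℝ} (hφa : Tendsto (fun n => φ (a n)) atTop (𝓝 L))
    {k : ℕ → ℕ} (hk : Tendsto k atTop atTop) (hak : Tendsto (fun j => a (k j)) atTop (𝓝 l)) :
    Tendsto a atTop (𝓝 l) := by
  have hl : 0 ≤ l := ge_of_tendsto' hak fun j => ha (k j)
  have hφak := hφa.comp hk
  refine tendsto_order.2 ⟨fun b hb => ?_, fun b hb => ?_⟩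
  · rcases lt_or_ge b 0 with hb0 | hb0
    · exact Eventually.of_forall fun n => hb0.trans_le (ha n)
    obtain ⟨m, hbm, hml⟩ := exists_between hb
    have hm : φ m ≤ L := ge_of_tendsto hφak <| (hak.eventually_const_lt hml).mono fun j hj =>
      (hφ (hb0.trans hbm.le) (ha _) hj).le
    filter_upwards [hφa.eventually_const_lt ((hφ hb0 (hb0.trans hbm.le) hbm).trans_le hm)]
      with n hn using (hφ.lt_iff_lt hb0 (ha n)).1 hn
  · obtain ⟨m, hlm, hmb⟩ := exists_between hb
    have hm0 : 0 ≤ m := hl.trans hlm.le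
    have hm : L ≤ φ m := le_of_tendsto hφak <| (hak.eventually_lt_const hlm).mono fun j hj =>
      (hφ (ha _) hm0 hj).le
    filter_upwards [hφa.eventually_lt_const (hm.trans_lt (hφ hm0 (hm0.trans hmb.le) hmb))]
      with n hn using (hφ.lt_iff_lt (ha n) (hm0.trans hmb.le)).1 hn

lemma tendsto_of_tendsto_dist_of_mem_closure {X : Type*} [PseudoMetricSpace X] {u : ℕ → X}
    {D : Set X} {p : X} (hp : p ∈ closure D)
    (hD : ∀ z ∈ D, Tendsto (fun n => dist (u n) z) atTop (𝓝 (dist p z))) :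
    Tendsto u atTop (𝓝 p) := by
  refine Metric.tendsto_atTop.2 fun ε hε => ?_
  obtain ⟨z, hz, hpz⟩ := Metric.mem_closure_iff.1 hp (ε / 3) (by positivity)
  obtain ⟨N, hN⟩ := eventually_atTop.1 ((hD z hz).eventually_lt_const
    (show dist p z < dist p z + ε / 3 by linarith))
  refine ⟨N, fun n hn => ?_⟩
  calc dist (u n) p ≤ dist (u n) z + dist p z := dist_triangle_right _ _ _
    _ < ε := by linarith [hN n hn]

lemma tendsto_of_tendsto_comp_norm_sub_of_mem_closure {E : Type*} [SeminormedAddCommGroup E]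
    {φ : ℝ → ℝ} (hφ : StrictMonoOn φ (Set.Ici 0)) {u : ℕ → E} {D : Set E} {p : E}
    (hp : p ∈ closure D) (hD : ∀ z ∈ D, ∃ L, Tendsto (fun n => φ ‖u n - z‖) atTop (𝓝 L))
    {k : ℕ → ℕ} (hk : StrictMono k) (hkp : Tendsto (fun j => u (k j)) atTop (𝓝 p)) :
    Tendsto u atTop (𝓝 p) := by
  refine tendsto_of_tendsto_dist_of_mem_closure hp fun z hz => ?_
  obtain ⟨L, hL⟩ := hD z hz
  simpa only [dist_eq_norm] using tendsto_of_strictMonoOn_comp_of_subseq hφ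
    (fun n => norm_nonneg _) hL hk.tendsto_atTop (hkp.sub_const z).norm

lemma IsStrongClusterPt.isWeakClusterPt {E : Type*} [NormedAddCommGroup E]
    [InnerProductSpace ℝ E] {p : E} {u : ℕ → E} (h : IsStrongClusterPt p u) :
    IsWeakClusterPt p u :=
  let ⟨k, hk, hkp⟩ := h
  ⟨k, hk, fun _ => hkp.inner tendsto_const_nhds⟩

lemma MonotoneOn.measurable_comp {α : Type*} [MeasurableSpace α] {φ : ℝ → ℝ}
    (hφ : MonotoneOn φ (Set.Ici 0)) {f : α → ℝ} (hf : Measurable f) (hf0 : ∀ a, 0 ≤ f a) :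
    Measurable fun a => φ (f a) := by
  have hmono : Monotone fun t => φ (max t 0) := fun s t hst =>
    hφ (le_max_right s 0) (le_max_right t 0) (max_le_max_right 0 hst)
  convert hmono.measurable.comp hf using 1
  funext a
  simp only [Function.comp_apply, max_eq_left (hf0 a)]

section AlmostSupermartingale

open Finset

variable {Ω : Type*} {m0 : MeasurableSpace Ω} {μ : Measure Ω} {ℱ : Filtration ℕ m0}
  {U β : ℕ → Ω → ℝ} {c : ℝ}

def partialSumLE (β : ℕ → Ω → ℝ) (c : ℝ) (n : ℕ) : Set Ω :=
  {ω | ∑ k ∈ range (n + 1), β k ω ≤ c}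

/-- `U n - ∑ k < n, β k`, frozen from the first time `n` at which `∑ k ≤ n, β k`
(already known at time `n`) exceeds `c`. -/
noncomputable def compensatedStopped (U β : ℕ → Ω → ℝ) (c : ℝ) (n : ℕ) (ω : Ω) : ℝ :=
  U 0 ω + ∑ m ∈ range n, (partialSumLE β c m).indicator (U (m + 1) - (U m + β m)) ω

@[simp]
lemma compensatedStopped_zero : compensatedStopped U β c 0 = U 0 := by
  funext ω
  simp [compensatedStopped]

lemma compensatedStopped_succ (n : ℕ) :
    compensatedStopped U β c (n + 1) = compensatedStopped U β c n +
      ((partialSumLE β c n).indicator (U (n + 1)) -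
        (partialSumLE β c n).indicator (U n + β n)) := by
  funext ω
  simp only [compensatedStopped, sum_range_succ, Set.indicator_sub', Pi.add_apply, Pi.sub_apply]
  ring

lemma compensatedStopped_eq_of_sum_le (hβ : ∀ n ω, 0 ≤ β n ω) {n : ℕ} {ω : Ω}
    (h : ∑ k ∈ range n, β k ω ≤ c) :
    compensatedStopped U β c n ω = U n ω - ∑ k ∈ range n, β k ω := by
  induction n with
  | zero => simp
  | succ n ih =>
    have hn : ∑ k ∈ range n, β k ω ≤ c := by
      rw [sum_range_succ] at h; linarith [hβ n ω]
    have hmem : ω ∈ partialSumLE β c n := h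
    rw [compensatedStopped_succ, Pi.add_apply, Pi.sub_apply, ih hn, Set.indicator_of_mem hmem,
      Set.indicator_of_mem hmem, sum_range_succ, Pi.add_apply]
    ring

lemma neg_le_compensatedStopped (hU : ∀ n ω, 0 ≤ U n ω) (hβ : ∀ n ω, 0 ≤ β n ω) (hc : 0 ≤ c)
    (n : ℕ) (ω : Ω) : -c ≤ compensatedStopped U β c n ω := by
  induction n with
  | zero => simpa using (neg_nonpos.2 hc).trans (hU 0 ω)
  | succ n ih =>
    by_cases h : ω ∈ partialSumLE β c n
    · rw [compensatedStopped_eq_of_sum_le hβ h]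
      linarith [hU (n + 1) ω, show ∑ k ∈ range (n + 1), β k ω ≤ c from h]
    · rw [compensatedStopped_succ, Pi.add_apply, Pi.sub_apply, Set.indicator_of_notMem h,
        Set.indicator_of_notMem h]
      linarith

lemma measurableSet_partialSumLE (hβ : Adapted ℱ β) (n : ℕ) :
    MeasurableSet[ℱ n] (partialSumLE β c n) :=
  measurableSet_le (Finset.measurable_sum _ fun k hk =>
    (hβ k).mono (ℱ.mono (Nat.lt_succ_iff.1 (mem_range.1 hk))) le_rfl) measurable_const

lemma adapted_compensatedStopped (hU : Adapted ℱ U) (hβ : Adapted ℱ β) :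
    Adapted ℱ (compensatedStopped U β c) := fun n =>
  ((hU 0).mono (ℱ.mono n.zero_le) le_rfl).add <| Finset.measurable_sum _ fun m hm =>
    ((hU (m + 1)).sub ((hU m).add (hβ m) |>.mono (ℱ.mono m.le_succ) le_rfl)).indicator
      (ℱ.mono m.le_succ _ (measurableSet_partialSumLE hβ m)) |>.mono
      (ℱ.mono (mem_range.1 hm)) le_rfl

lemma integrable_indicator_partialSumLE [IsFiniteMeasure μ] (hU : Adapted ℱ U)
    (hUint : ∀ n, Integrable (U n) μ) (hU0 : ∀ n ω, 0 ≤ U n ω) (hβ : Adapted ℱ β)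
    (hβ0 : ∀ n ω, 0 ≤ β n ω) (hc : 0 ≤ c) (n : ℕ) :
    Integrable ((partialSumLE β c n).indicator (U n + β n)) μ := by
  refine ((hUint n).add (integrable_const c)).mono' ?_ (Eventually.of_forall fun ω => ?_)
  · exact (((hU n).add (hβ n)).indicator (measurableSet_partialSumLE hβ n)).mono (ℱ.le n)
      le_rfl |>.aestronglyMeasurable
  by_cases h : ω ∈ partialSumLE β c n
  · have hβc : β n ω ≤ c :=
      (single_le_sum (fun k _ => hβ0 k ω) (self_mem_range_succ n)).trans h
    rw [Set.indicator_of_mem h, Pi.add_apply,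
      Real.norm_of_nonneg (add_nonneg (hU0 n ω) (hβ0 n ω))]
    simpa using hβc
  · rw [Set.indicator_of_notMem h, norm_zero]
    exact add_nonneg (hU0 n ω) hc

lemma supermartingale_compensatedStopped [IsFiniteMeasure μ] (hU : Adapted ℱ U)
    (hUint : ∀ n, Integrable (U n) μ) (hU0 : ∀ n ω, 0 ≤ U n ω) (hβ : Adapted ℱ β)
    (hβ0 : ∀ n ω, 0 ≤ β n ω) (hc : 0 ≤ c) (hle : ∀ n, μ[U (n + 1) | ℱ n] ≤ᵐ[μ] U n + β n) :
    Supermartingale (compensatedStopped U β c) ℱ μ := by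
  set Z := compensatedStopped U β c
  have hZsucc : ∀ n, Z (n + 1) = Z n + ((partialSumLE β c n).indicator (U (n + 1)) -
      (partialSumLE β c n).indicator (U n + β n)) := compensatedStopped_succ
  have hZ : Adapted ℱ Z := adapted_compensatedStopped hU hβ
  have hg := integrable_indicator_partialSumLE hU hUint hU0 hβ hβ0 hc
  have hZint : ∀ n, Integrable (Z n) μ := by
    intro n
    induction n with
    | zero => simpa [Z] using hUint 0
    | succ n ih =>
      rw [hZsucc]
      exact ih.add (((hUint (n + 1)).indicator
        (ℱ.le n _ (measurableSet_partialSumLE hβ n))).sub (hg n))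
  refine supermartingale_nat (fun n => (hZ n).stronglyMeasurable) hZint fun n => ?_
  set s := partialSumLE β c n
  have hs : MeasurableSet[ℱ n] s := measurableSet_partialSumLE hβ n
  have hUs := (hUint (n + 1)).indicator (ℱ.le n _ hs)
  rw [hZsucc]
  calc μ[Z n + (s.indicator (U (n + 1)) - s.indicator (U n + β n)) | ℱ n]
      =ᵐ[μ] Z n + (s.indicator (μ[U (n + 1) | ℱ n]) - s.indicator (U n + β n)) := by
        refine (condExp_add (hZint n) (hUs.sub (hg n)) _).trans ?_
        rw [condExp_of_stronglyMeasurable (ℱ.le n) (hZ n).stronglyMeasurable (hZint n)]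
        refine (EventuallyEq.refl _ _).add ((condExp_sub hUs (hg n) _).trans ?_)
        rw [condExp_of_stronglyMeasurable (ℱ.le n)
          (((hU n).add (hβ n)).indicator hs).stronglyMeasurable (hg n)]
        filter_upwards [condExp_indicator (hUint (n + 1)) hs] with ω hω
        simp only [Pi.sub_apply, hω]
    _ ≤ᵐ[μ] Z n := by
        filter_upwards [hle n] with ω hω
        by_cases h : ω ∈ s
        · simp only [Pi.add_apply, Pi.sub_apply, Set.indicator_of_mem h]
          linarith [show (μ[U (n + 1) | ℱ n]) ω ≤ U n ω + β n ω from hω]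
        · simp [Set.indicator_of_notMem h]

lemma MeasureTheory.Supermartingale.exists_ae_tendsto_of_const_le [IsFiniteMeasure μ]
    {Z : ℕ → Ω → ℝ} (hZ : Supermartingale Z ℱ μ) (hc : ∀ n ω, c ≤ Z n ω) :
    ∀ᵐ ω ∂μ, ∃ L, Tendsto (fun n => Z n ω) atTop (𝓝 L) := by
  set R := ∫ ω, Z 0 ω ∂μ + 2 * |c| * μ.real Set.univ
  have hL1 : ∀ n, ∫ ω, ‖Z n ω‖ ∂μ ≤ R := fun n => calc
    ∫ ω, ‖Z n ω‖ ∂μ ≤ ∫ ω, (Z n ω + 2 * |c|) ∂μ :=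
      integral_mono (hZ.integrable n).norm ((hZ.integrable n).add (integrable_const _))
        fun ω => by
          rw [Real.norm_eq_abs, abs_le]
          constructor <;> linarith [hc n ω, neg_abs_le c, abs_nonneg c]
    _ = ∫ ω, Z n ω ∂μ + 2 * |c| * μ.real Set.univ := by
      rw [integral_add (hZ.integrable n) (integrable_const _), integral_const, smul_eq_mul,
        mul_comm]
    _ ≤ R := by
      simpa [R] using hZ.setIntegral_le n.zero_le MeasurableSet.univ
  have hbdd : ∀ n, eLpNorm ((-Z) n) 1 μ ≤ R.toNNReal := fun n => by
    rw [Pi.neg_apply, eLpNorm_neg, eLpNorm_one_eq_lintegral_enorm,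
      ← ofReal_integral_norm_eq_lintegral_enorm (hZ.integrable n)]
    exact ENNReal.ofReal_le_ofReal (hL1 n)
  filter_upwards [hZ.neg.exists_ae_tendsto_of_bdd hbdd] with ω ⟨L, hL⟩
  exact ⟨-L, by simpa using hL.neg⟩

theorem exists_ae_tendsto_of_condExp_le_add [IsFiniteMeasure μ] (hU : Adapted ℱ U)
    (hUint : ∀ n, Integrable (U n) μ) (hU0 : ∀ n ω, 0 ≤ U n ω) (hβ : Adapted ℱ β)
    (hβ0 : ∀ n ω, 0 ≤ β n ω) (hβsum : ∀ᵐ ω ∂μ, Summable fun n => β n ω)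
    (hle : ∀ n, μ[U (n + 1) | ℱ n] ≤ᵐ[μ] U n + β n) :
    ∀ᵐ ω ∂μ, ∃ L, Tendsto (fun n => U n ω) atTop (𝓝 L) := by
  have hstopped : ∀ c : ℕ, ∀ᵐ ω ∂μ, ∃ L,
      Tendsto (fun n => compensatedStopped U β c n ω) atTop (𝓝 L) := fun c =>
    (supermartingale_compensatedStopped hU hUint hU0 hβ hβ0 c.cast_nonneg hle
      ).exists_ae_tendsto_of_const_le (neg_le_compensatedStopped hU0 hβ0 c.cast_nonneg)
  filter_upwards [hβsum, ae_all_iff.2 hstopped] with ω hβω hω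
  obtain ⟨c, hc⟩ := exists_nat_ge (∑' n, β n ω)
  obtain ⟨L, hL⟩ := hω c
  refine ⟨L + ∑' n, β n ω, (hL.add hβω.hasSum.tendsto_sum_nat).congr fun n => ?_⟩
  rw [compensatedStopped_eq_of_sum_le hβ0 ((hβω.sum_le_tsum _ fun k _ => hβ0 k ω).trans hc)]
  ring

end AlmostSupermartingale

section RobbinsSiegmund

open Finset

variable {Ω : Type*} {m0 : MeasurableSpace Ω} {ℱ : Filtration ℕ m0} {χ : ℕ → Ω → ℝ}

noncomputable def compoundFactor (χ : ℕ → Ω → ℝ) (n : ℕ) (ω : Ω) : ℝ :=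
  ∏ k ∈ range n, (1 + χ k ω)

lemma one_le_compoundFactor (hχ0 : ∀ n ω, 0 ≤ χ n ω) (n : ℕ) (ω : Ω) :
    1 ≤ compoundFactor χ n ω :=
  one_le_prod fun k _ => le_add_of_nonneg_right (hχ0 k ω)

lemma compoundFactor_succ (n : ℕ) (ω : Ω) :
    compoundFactor χ (n + 1) ω = compoundFactor χ n ω * (1 + χ n ω) :=
  prod_range_succ _ _

lemma measurable_compoundFactor (hχ : Adapted ℱ χ) {n m : ℕ} (hnm : n ≤ m + 1) :
    Measurable[ℱ m] (compoundFactor χ n) :=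
  Finset.measurable_prod _ fun k hk => measurable_const.add <|
    (hχ k).mono (ℱ.mono (by have := mem_range.1 hk; omega)) le_rfl

/-- Robbins–Siegmund. -/
theorem exists_ae_tendsto_of_condExp_le_one_add_mul_add {μ : Measure Ω} [IsFiniteMeasure μ]
    {V η : ℕ → Ω → ℝ} (hV : Adapted ℱ V) (hVint : ∀ n, Integrable (V n) μ)
    (hV0 : ∀ n ω, 0 ≤ V n ω) (hχ : Adapted ℱ χ) (hχ0 : ∀ n ω, 0 ≤ χ n ω) (hη : Adapted ℱ η)
    (hη0 : ∀ n ω, 0 ≤ η n ω)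
    (hχsum : ∀ᵐ ω ∂μ, Summable fun n => χ n ω) (hηsum : ∀ᵐ ω ∂μ, Summable fun n => η n ω)
    (hle : ∀ n, μ[V (n + 1) | ℱ n] ≤ᵐ[μ] (1 + χ n) * V n + η n) :
    ∀ᵐ ω ∂μ, ∃ L, Tendsto (fun n => V n ω) atTop (𝓝 L) := by
  set A := compoundFactor χ
  have hA0 : ∀ n ω, 0 < A n ω := fun n ω => one_pos.trans_le (one_le_compoundFactor hχ0 n ω)
  have hA_inv_le : ∀ n ω, (A n ω)⁻¹ ≤ 1 := fun n ω =>
    inv_le_one_of_one_le₀ (one_le_compoundFactor hχ0 n ω)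
  have hAm : ∀ n, Measurable[ℱ n] (A (n + 1)) := fun n => measurable_compoundFactor hχ le_rfl
  have hAsucc : ∀ n ω, A (n + 1) ω = A n ω * (1 + χ n ω) := compoundFactor_succ
  set U : ℕ → Ω → ℝ := fun n => (A n)⁻¹ * V n
  set β : ℕ → Ω → ℝ := fun n => (A (n + 1))⁻¹ * η n
  have hU : Adapted ℱ U := fun n => (measurable_compoundFactor hχ n.le_succ).inv.mul (hV n)
  have hUint : ∀ n, Integrable (U n) μ := fun n =>
    (hVint n).bdd_mul (c := 1) ((measurable_compoundFactor hχ n.le_succ).inv.mono (ℱ.le n)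
      le_rfl).aestronglyMeasurable (Eventually.of_forall fun ω => by
        rw [Pi.inv_apply, norm_inv, Real.norm_of_nonneg (hA0 n ω).le]
        exact hA_inv_le n ω)
  have hUle : ∀ n, μ[U (n + 1) | ℱ n] ≤ᵐ[μ] U n + β n := fun n => by
    filter_upwards [condExp_mul_of_stronglyMeasurable_left (hAm n).inv.stronglyMeasurable
      (hUint (n + 1)) (hVint (n + 1)), hle n] with ω hω hleω
    simp only [U, β, hω, Pi.mul_apply, Pi.inv_apply, Pi.add_apply, Pi.one_apply] at hleω ⊢
    calc (A (n + 1) ω)⁻¹ * μ[V (n + 1) | ℱ n] ω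
        ≤ (A (n + 1) ω)⁻¹ * ((1 + χ n ω) * V n ω + η n ω) :=
          mul_le_mul_of_nonneg_left hleω (inv_nonneg.2 (hA0 _ ω).le)
      _ = (A n ω)⁻¹ * V n ω + (A (n + 1) ω)⁻¹ * η n ω := by
          rw [hAsucc, mul_add, mul_inv, mul_assoc, inv_mul_cancel_left₀
            (by linarith [hχ0 n ω] : (1 + χ n ω) ≠ 0)]
  have hβ0 : ∀ n ω, 0 ≤ β n ω := fun n ω => mul_nonneg (inv_nonneg.2 (hA0 _ ω).le) (hη0 n ω)
  have hUconv := exists_ae_tendsto_of_condExp_le_add hU hUint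
    (fun n ω => mul_nonneg (inv_nonneg.2 (hA0 n ω).le) (hV0 n ω))
    (fun n => (hAm n).inv.mul (hη n)) hβ0
    (hηsum.mono fun ω h => h.of_nonneg_of_le (hβ0 · ω) fun n =>
      mul_le_of_le_one_left (hη0 n ω) (hA_inv_le _ ω)) hUle
  filter_upwards [hUconv, hχsum] with ω ⟨L, hL⟩ hχω
  refine ⟨L * ∏' k, (1 + χ k ω), (hL.mul
    (Real.multipliable_one_add_of_summable hχω).tendsto_prod_tprod_nat).congr fun n => ?_⟩
  show (A n ω)⁻¹ * V n ω * A n ω = V n ω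
  field_simp [(hA0 n ω).ne']

end RobbinsSiegmund

theorem stochastic_quasiFejer_strong_convergence_of_weak_and_strong_general
    {H : Type*} [NormedAddCommGroup H] [InnerProductSpace ℝ H] [CompleteSpace H]
    [SecondCountableTopology H] [MeasurableSpace H] [BorelSpace H]
    {Ω : Type*} [MeasurableSpace Ω] (P : Measure Ω) [IsProbabilityMeasure P]
    (F : Set H)
    (φ : ℝ → ℝ) (hφmono : StrictMonoOn φ (Set.Ici (0 : ℝ)))
    (hφnonneg : ∀ t, 0 ≤ t → 0 ≤ φ t)
    (x : ℕ → Ω → H) (hxm : ∀ n, Measurable (x n))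
    (χ ϑ η : H → ℕ → Ω → ℝ)
    (hχnonneg : ∀ z ∈ F, ∀ n, ∀ ω, 0 ≤ χ z n ω)
    (hϑnonneg : ∀ z ∈ F, ∀ n, ∀ ω, 0 ≤ ϑ z n ω)
    (hηnonneg : ∀ z ∈ F, ∀ n, ∀ ω, 0 ≤ η z n ω)
    (hχmeas : ∀ z ∈ F, ∀ n, Measurable[sigmaFinSeq x n] (χ z n))
    (hηmeas : ∀ z ∈ F, ∀ n, Measurable[sigmaFinSeq x n] (η z n))
    (hχsum : ∀ z ∈ F, ∀ᵐ ω ∂P, Summable fun n => χ z n ω)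
    (hηsum : ∀ z ∈ F, ∀ᵐ ω ∂P, Summable fun n => η z n ω)
    (hint : ∀ z ∈ F, ∀ n, Integrable (fun ω => φ ‖x n ω - z‖) P)
    (hineq : ∀ z ∈ F, ∀ᵐ ω ∂P, ∀ n,
      (P[fun ω' => φ ‖x (n + 1) ω' - z‖ | sigmaFinSeq x n]) ω + ϑ z n ω ≤
        (1 + χ z n ω) * φ ‖x n ω - z‖ + η z n ω)
    (hstrong : ∀ᵐ ω ∂P, ∃ p : H, IsStrongClusterPt p (fun n => x n ω))
    (hweak : ∀ᵐ ω ∂P, ∀ p : H, IsWeakClusterPt p (fun n => x n ω) → p ∈ F) :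
    ∃ xlim : Ω → H, Measurable xlim ∧ (∀ᵐ ω ∂P, xlim ω ∈ F) ∧
      ∀ᵐ ω ∂P, Tendsto (fun n => x n ω) atTop (𝓝 (xlim ω)) := by
  have hxsm : ∀ n, StronglyMeasurable (x n) := fun n => (hxm n).stronglyMeasurable
  -- `ℱ n` is definitionally `sigmaFinSeq x n`.
  let ℱ := Filtration.natural x hxsm
  have hconv : ∀ z ∈ F, ∀ᵐ ω ∂P, ∃ L, Tendsto (fun n => φ ‖x n ω - z‖) atTop (𝓝 L) :=
    fun z hz => exists_ae_tendsto_of_condExp_le_one_add_mul_add (ℱ := ℱ)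
      (fun n => (hφmono.monotoneOn.measurable_comp (measurable_id.sub_const z).norm
        fun _ => norm_nonneg _).comp (Filtration.stronglyAdapted_natural hxsm n).measurable)
      (hint z hz) (fun _ _ => hφnonneg _ (norm_nonneg _)) (hχmeas z hz) (hχnonneg z hz)
      (hηmeas z hz) (hηnonneg z hz) (hχsum z hz) (hηsum z hz) fun n => by
        filter_upwards [hineq z hz] with ω hω
        change P[_ | sigmaFinSeq x n] ω ≤ (1 + χ z n ω) * φ ‖x n ω - z‖ + η z n ω
        linarith [hω n, hϑnonneg z hz n ω]
  obtain ⟨D, hDF, hDc, hFD⟩ :=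
    (TopologicalSpace.IsSeparable.of_separableSpace F).exists_countable_dense_subset
  have hlim : ∀ᵐ ω ∂P, ∃ p ∈ F, Tendsto (fun n => x n ω) atTop (𝓝 p) := by
    filter_upwards [(ae_ball_iff hDc).2 fun z hz => hconv z (hDF hz), hstrong, hweak]
      with ω hconvω ⟨p, hp⟩ hweakω
    have hpF : p ∈ F := hweakω p hp.isWeakClusterPt
    obtain ⟨k, hk, hkp⟩ := hp
    exact ⟨p, hpF, tendsto_of_tendsto_comp_norm_sub_of_mem_closure hφmono (hFD hpF) hconvω hk hkp⟩
  obtain ⟨xlim, hxlimm, hxlim⟩ := measurable_limit_of_tendsto_metrizable_ae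
    (fun n => (hxm n).aemeasurable) (hlim.mono fun ω ⟨p, _, hp⟩ => ⟨p, hp⟩)
  refine ⟨xlim, hxlimm, ?_, hxlim⟩
  filter_upwards [hlim, hxlim] with ω ⟨p, hpF, hp⟩ hω
  rwa [tendsto_nhds_unique hω hp]

theorem stochastic_quasiFejer_strong_convergence_of_weak_and_strong
    {H : Type*} [NormedAddCommGroup H] [InnerProductSpace ℝ H] [CompleteSpace H]
    [SecondCountableTopology H] [MeasurableSpace H] [BorelSpace H]
    {Ω : Type*} [MeasurableSpace Ω] (P : Measure Ω) [IsProbabilityMeasure P]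
    (F : Set H) (hFne : F.Nonempty) (hFcl : IsClosed F)
    (φ : ℝ → ℝ) (hφmono : StrictMonoOn φ (Set.Ici (0 : ℝ)))
    (hφnonneg : ∀ t, 0 ≤ t → 0 ≤ φ t) (hφtop : Tendsto φ atTop atTop)
    (x : ℕ → Ω → H) (hxm : ∀ n, Measurable (x n))
    (χ ϑ η : H → ℕ → Ω → ℝ)
    (hχnonneg : ∀ z ∈ F, ∀ n, ∀ ω, 0 ≤ χ z n ω)
    (hϑnonneg : ∀ z ∈ F, ∀ n, ∀ ω, 0 ≤ ϑ z n ω)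
    (hηnonneg : ∀ z ∈ F, ∀ n, ∀ ω, 0 ≤ η z n ω)
    (hχmeas : ∀ z ∈ F, ∀ n, Measurable[sigmaFinSeq x n] (χ z n))
    (hϑmeas : ∀ z ∈ F, ∀ n, Measurable[sigmaFinSeq x n] (ϑ z n))
    (hηmeas : ∀ z ∈ F, ∀ n, Measurable[sigmaFinSeq x n] (η z n))
    (hχsum : ∀ z ∈ F, ∀ᵐ ω ∂P, Summable fun n => χ z n ω)
    (hηsum : ∀ z ∈ F, ∀ᵐ ω ∂P, Summable fun n => η z n ω)
    (hint : ∀ z ∈ F, ∀ n, Integrable (fun ω => φ ‖x n ω - z‖) P)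
    (hineq : ∀ z ∈ F, ∀ᵐ ω ∂P, ∀ n,
      (P[fun ω' => φ ‖x (n + 1) ω' - z‖ | sigmaFinSeq x n]) ω + ϑ z n ω ≤
        (1 + χ z n ω) * φ ‖x n ω - z‖ + η z n ω)
    (hstrong : ∀ᵐ ω ∂P, ∃ p : H, IsStrongClusterPt p (fun n => x n ω))
    (hweak : ∀ᵐ ω ∂P, ∀ p : H, IsWeakClusterPt p (fun n => x n ω) → p ∈ F) :
    ∃ xlim : Ω → H, Measurable xlim ∧ (∀ᵐ ω ∂P, xlim ω ∈ F) ∧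
      ∀ᵐ ω ∂P, Tendsto (fun n => x n ω) atTop (𝓝 (xlim ω)) :=
  stochastic_quasiFejer_strong_convergence_of_weak_and_strong_general P F φ hφmono hφnonneg x hxm χ
    ϑ η hχnonneg hϑnonneg hηnonneg hχmeas hηmeas hχsum hηsum hint hineq hstrong hweak
end

section
/- Let (λ_n)_{n∈ℕ} be a sequence in [0,1] with Σ_{n∈ℕ} λ_n(1 − λ_n) = ∞, let T: H → H be nonexpansive with Fix T ≠ ∅, let x_0 and (e_n)_{n∈ℕ} be H-valued random variables, and define x_{n+1} = x_n + λ_n(T x_n + e_n − x_n) for every n ∈ ℕ. Assume Σ_{n∈ℕ} λ_n √(E[‖e_n‖² | 𝓧_n]) < ∞ P-a.s. Then (x_n)_{n∈ℕ} converges weakly P-almost surely to a (Fix T)-valued random variable. -/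
open MeasureTheory Filter Topology
open scoped RealInnerProductSpace

/-!
Conditional Jensen gives `E[λₙ ‖eₙ‖ | 𝓧ₙ] ≤ λₙ √E[‖eₙ‖² | 𝓧ₙ]`, and integrating over the
`𝓧ₙ`-measurable events `{∑_{k ≤ n} λₖ √E[‖eₖ‖² | 𝓧ₖ] ≤ c}` turns the almost sure summability of
the right-hand side into almost sure summability of `λₙ ‖eₙ‖`. Along such a path the recursion is a
Krasnosel'skiĭ–Mann iteration with summable errors: it is quasi-Fejér with respect to `Fix T`, its
residuals `T xₙ - xₙ` tend to `0`, so by demiclosedness of `Id - T` every weak cluster point is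
fixed, and Opial's lemma gives weak convergence. The pathwise limit is measurable because in a
separable Hilbert space a map is measurable as soon as its inner products with all vectors are.
-/

open scoped ENNReal

theorem exists_tendsto_and_summable_of_le_sub_add {a b c : ℕ → ℝ} (ha : ∀ n, 0 ≤ a n)
    (hb : ∀ n, 0 ≤ b n) (hc : Summable c) (h : ∀ n, a (n + 1) ≤ a n - b n + c n) :
    (∃ l, Tendsto a atTop (𝓝 l)) ∧ Summable b := by
  set B : ℕ → ℝ := fun n => ∑ k ∈ Finset.range n, b k
  set C : ℕ → ℝ := fun n => ∑ k ∈ Finset.range n, c k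
  obtain ⟨K, hK⟩ := hc.hasSum.tendsto_sum_nat.bddAbove_range
  have hCK : ∀ n, C n ≤ K := fun n => hK ⟨n, rfl⟩
  have hanti : Antitone fun n => a n + B n - C n := antitone_nat_of_succ_le fun n => by
    simp only [B, C, Finset.sum_range_succ]
    linarith [h n]
  have hB : ∀ n, B n ≤ a 0 + K := fun n => by
    have h0 : a n + B n - C n ≤ a 0 := by simpa [B, C] using hanti (Nat.zero_le n)
    linarith [ha n, hCK n]
  have hbdd : BddBelow (Set.range fun n => a n + B n - C n) := by
    refine ⟨-K, ?_⟩
    rintro _ ⟨n, rfl⟩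
    linarith [ha n, hCK n, Finset.sum_nonneg fun k (_ : k ∈ Finset.range n) => hb k]
  have hbsum : Summable b := summable_of_sum_range_le hb hB
  have hlim := ((tendsto_atTop_ciInf hanti hbdd).sub hbsum.hasSum.tendsto_sum_nat).add
    hc.hasSum.tendsto_sum_nat
  exact ⟨⟨_, hlim.congr fun n => by simp only [B, C]; ring⟩, hbsum⟩

theorem exists_tendsto_of_le_add {a c : ℕ → ℝ} (ha : ∀ n, 0 ≤ a n) (hc : Summable c)
    (h : ∀ n, a (n + 1) ≤ a n + c n) : ∃ l, Tendsto a atTop (𝓝 l) :=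
  (exists_tendsto_and_summable_of_le_sub_add ha (fun _ => le_rfl) hc
    fun n => by simpa using h n).1

theorem summable_of_summable_mul_sq_of_tendsto {w d : ℕ → ℝ} {δ : ℝ} (hw : ∀ n, 0 ≤ w n)
    (hd : Tendsto d atTop (𝓝 δ)) (hδ : δ ≠ 0) (h : Summable fun n => w n * d n ^ 2) :
    Summable w := by
  have hδ2 : 0 < δ ^ 2 := by positivity
  have hev : ∀ᶠ n in atTop, δ ^ 2 / 2 ≤ d n ^ 2 :=
    (hd.pow 2).eventually (eventually_ge_nhds (by linarith))
  refine (h.mul_left (2 / δ ^ 2)).of_norm_bounded_eventually_nat (hev.mono fun n hn => ?_)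
  have h1 : 1 ≤ 2 / δ ^ 2 * d n ^ 2 := by
    rw [div_mul_eq_mul_div, le_div_iff₀ hδ2]
    linarith
  rw [Real.norm_of_nonneg (hw n)]
  nlinarith [hw n]

section Hilbert

variable {H : Type*} [NormedAddCommGroup H] [InnerProductSpace ℝ H]

theorem norm_one_sub_smul_add_smul_sq (t : ℝ) (a b : H) :
    ‖(1 - t) • a + t • b‖ ^ 2 = (1 - t) * ‖a‖ ^ 2 + t * ‖b‖ ^ 2 - t * (1 - t) * ‖a - b‖ ^ 2 := by
  simp only [← real_inner_self_eq_norm_sq, inner_add_add_self, inner_sub_sub_self,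
    real_inner_smul_left, real_inner_smul_right, real_inner_comm a b]
  ring

-- `‖w j - T p‖² - ‖w j - p‖² = 2 ⟪w j - p, p - T p⟫ + ‖p - T p‖²` tends to `‖p - T p‖²`, while
-- nonexpansiveness bounds it by `O(‖T (w j) - w j‖)`.
theorem LipschitzWith.isFixedPt_of_tendsto_inner {T : H → H} (hT : LipschitzWith 1 T)
    {w : ℕ → H} {p : H} {M : ℝ} (hwM : ∀ j, ‖w j - p‖ ≤ M)
    (hwp : ∀ y, Tendsto (fun j => ⟪w j, y⟫) atTop (𝓝 ⟪p, y⟫))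
    (hres : Tendsto (fun j => ‖T (w j) - w j‖) atTop (𝓝 0)) :
    Function.IsFixedPt T p := by
  set d := fun j => ‖T (w j) - w j‖
  have key : ∀ j, 2 * ⟪w j - p, p - T p⟫ + ‖p - T p‖ ^ 2 ≤ d j * (d j + 2 * M) := fun j => by
    have hexp : ‖w j - T p‖ ^ 2 = ‖w j - p‖ ^ 2 + 2 * ⟪w j - p, p - T p⟫ + ‖p - T p‖ ^ 2 := by
      rw [show w j - T p = (w j - p) + (p - T p) by abel, norm_add_sq_real]
    have hle : ‖w j - T p‖ ≤ d j + ‖w j - p‖ := calc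
      ‖w j - T p‖ ≤ ‖w j - T (w j)‖ + ‖T (w j) - T p‖ := norm_sub_le_norm_sub_add_norm_sub _ _ _
      _ ≤ d j + ‖w j - p‖ := add_le_add (norm_sub_rev _ _).le
        (by simpa [dist_eq_norm] using hT.dist_le_mul (w j) p)
    nlinarith [norm_nonneg (w j - T p), norm_nonneg (w j - p), hwM j,
      show 0 ≤ d j from norm_nonneg _]
  have hlhs : Tendsto (fun j => 2 * ⟪w j - p, p - T p⟫ + ‖p - T p‖ ^ 2) atTop
      (𝓝 (2 * 0 + ‖p - T p‖ ^ 2)) := by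
    refine ((Tendsto.const_mul 2 ?_).add_const _)
    simpa [inner_sub_left] using (hwp (p - T p)).sub_const ⟪p, p - T p⟫
  have hrhs : Tendsto (fun j => d j * (d j + 2 * M)) atTop (𝓝 (0 * (0 + 2 * M))) :=
    hres.mul (hres.add_const _)
  have hr : ‖p - T p‖ ^ 2 ≤ 0 := by simpa using le_of_tendsto_of_tendsto' hlhs hrhs key
  have : p - T p = 0 := by simpa using hr
  exact (sub_eq_zero.1 this).symm

theorem exists_isWeakClusterPt_of_norm_le [CompleteSpace H] [TopologicalSpace.SeparableSpace H]
    {u : ℕ → H} {M : ℝ} (hu : ∀ n, ‖u n‖ ≤ M) : ∃ p, IsWeakClusterPt p u := by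
  let φ : ℕ → WeakDual ℝ H :=
    fun n => WeakDual.toStrongDual.symm (InnerProductSpace.toDual ℝ H (u n))
  have hφ : ∀ n, φ n ∈ WeakDual.toStrongDual ⁻¹' Metric.closedBall 0 M := fun n => by
    simpa [φ] using hu n
  obtain ⟨ψ, -, k, hk, hψ⟩ := WeakDual.isSeqCompact_closedBall ℝ H 0 M hφ
  refine ⟨(InnerProductSpace.toDual ℝ H).symm (WeakDual.toStrongDual ψ), k, hk, fun y => ?_⟩
  rw [InnerProductSpace.toDual_symm_apply]
  exact (((WeakDual.eval_continuous y).tendsto ψ).comp hψ).congr fun j => by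
    simp [φ]

-- `⟪u n, p - q⟫` is determined by `‖u n - p‖` and `‖u n - q‖`, so it converges along the
-- whole sequence and cannot have two different subsequential limits `⟪p, p - q⟫`, `⟪q, p - q⟫`.
theorem eq_of_tendsto_inner_of_tendsto_norm_sub {u : ℕ → H} {p q : H} {Lp Lq : ℝ}
    (hp : Tendsto (fun n => ‖u n - p‖) atTop (𝓝 Lp))
    (hq : Tendsto (fun n => ‖u n - q‖) atTop (𝓝 Lq)) {k k' : ℕ → ℕ}
    (hk : Tendsto k atTop atTop) (hk' : Tendsto k' atTop atTop)
    (hkp : Tendsto (fun j => ⟪u (k j), p - q⟫) atTop (𝓝 ⟪p, p - q⟫))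
    (hkq : Tendsto (fun j => ⟪u (k' j), p - q⟫) atTop (𝓝 ⟪q, p - q⟫)) : p = q := by
  have hpol : ∀ n, ⟪u n, p - q⟫ = (‖u n - q‖ ^ 2 - ‖u n - p‖ ^ 2 - ‖q‖ ^ 2 + ‖p‖ ^ 2) / 2 :=
    fun n => by
      rw [inner_sub_right, norm_sub_sq_real, norm_sub_sq_real]
      ring
  have hlim : Tendsto (fun n => ⟪u n, p - q⟫) atTop
      (𝓝 ((Lq ^ 2 - Lp ^ 2 - ‖q‖ ^ 2 + ‖p‖ ^ 2) / 2)) := by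
    simp only [hpol]
    exact ((((hq.pow 2).sub (hp.pow 2)).sub_const _).add_const _).div_const 2
  have h1 := tendsto_nhds_unique hkp (hlim.comp hk)
  have h2 := tendsto_nhds_unique hkq (hlim.comp hk')
  have : ⟪p - q, p - q⟫ = 0 := by rw [inner_sub_left, h1, h2, sub_self]
  exact sub_eq_zero.1 (inner_self_eq_zero.1 this)

theorem exists_tendsto_inner_of_opial [CompleteSpace H] [TopologicalSpace.SeparableSpace H]
    {C : Set H} {u : ℕ → H} {M : ℝ} (hu : ∀ n, ‖u n‖ ≤ M)
    (hdist : ∀ q ∈ C, ∃ L, Tendsto (fun n => ‖u n - q‖) atTop (𝓝 L))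
    (hclust : ∀ (k : ℕ → ℕ) (p : H), Tendsto k atTop atTop →
      (∀ y, Tendsto (fun j => ⟪u (k j), y⟫) atTop (𝓝 ⟪p, y⟫)) → p ∈ C) :
    ∃ p ∈ C, ∀ y, Tendsto (fun n => ⟪u n, y⟫) atTop (𝓝 ⟪p, y⟫) := by
  have hsub : ∀ ns : ℕ → ℕ, Tendsto ns atTop atTop → ∃ p ∈ C, ∃ ms : ℕ → ℕ, StrictMono ms ∧
      ∀ y, Tendsto (fun j => ⟪u (ns (ms j)), y⟫) atTop (𝓝 ⟪p, y⟫) := fun ns hns => by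
    obtain ⟨p, ms, hms, hp⟩ := exists_isWeakClusterPt_of_norm_le fun j => hu (ns j)
    exact ⟨p, hclust _ p (hns.comp hms.tendsto_atTop) hp, ms, hms, hp⟩
  obtain ⟨p, hpC, k, hk, hp⟩ := hsub id tendsto_id
  refine ⟨p, hpC, fun y => tendsto_of_subseq_tendsto fun ns hns => ?_⟩
  obtain ⟨q, hqC, ms, hms, hq⟩ := hsub ns hns
  obtain ⟨Lp, hLp⟩ := hdist p hpC
  obtain ⟨Lq, hLq⟩ := hdist q hqC
  have hqp : q = p := eq_of_tendsto_inner_of_tendsto_norm_sub hLq hLp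
    (hns.comp hms.tendsto_atTop) hk.tendsto_atTop (hq _) (hp _)
  exact ⟨ms, hqp ▸ hq y⟩

end Hilbert

namespace KrasnoselskiiMann

open Function

variable {H : Type*} [NormedAddCommGroup H] [InnerProductSpace ℝ H] {T : H → H}

theorem sq_norm_add_smul_sub_fixedPt_le (hT : LipschitzWith 1 T) {q : H} (hq : IsFixedPt T q)
    {t : ℝ} (ht : t ∈ Set.Icc (0 : ℝ) 1) (x : H) :
    ‖x + t • (T x - x) - q‖ ^ 2 ≤ ‖x - q‖ ^ 2 - t * (1 - t) * ‖T x - x‖ ^ 2 := by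
  have hTx : ‖T x - q‖ ≤ ‖x - q‖ := by
    simpa [dist_eq_norm, hq.eq] using hT.dist_le_mul x q
  have hsq : ‖T x - q‖ ^ 2 ≤ ‖x - q‖ ^ 2 := pow_le_pow_left₀ (norm_nonneg _) hTx 2
  have hsplit : x + t • (T x - x) - q = (1 - t) • (x - q) + t • (T x - q) := by
    simp only [smul_sub, sub_smul, one_smul]
    abel
  rw [hsplit, norm_one_sub_smul_add_smul_sq, show x - q - (T x - q) = -(T x - x) by abel,
    norm_neg]
  nlinarith [ht.1]

theorem norm_add_smul_sub_fixedPt_le (hT : LipschitzWith 1 T) {q : H} (hq : IsFixedPt T q)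
    {t : ℝ} (ht : t ∈ Set.Icc (0 : ℝ) 1) (x : H) : ‖x + t • (T x - x) - q‖ ≤ ‖x - q‖ := by
  refine (pow_le_pow_iff_left₀ (norm_nonneg _) (norm_nonneg _) two_ne_zero).1 ?_
  have := sq_norm_add_smul_sub_fixedPt_le hT hq ht x
  nlinarith [mul_nonneg (mul_nonneg ht.1 (sub_nonneg.2 ht.2)) (sq_nonneg ‖T x - x‖)]

variable {lam : ℕ → ℝ} {u ε : ℕ → H}

theorem succ_eq_add_smul_add_smul (hrec : ∀ n, u (n + 1) = u n + lam n • (T (u n) + ε n - u n))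
    (n : ℕ) : u (n + 1) = u n + lam n • (T (u n) - u n) + lam n • ε n := by
  rw [hrec n, smul_sub, smul_add, smul_sub]
  abel

theorem norm_lam_smul (hlam : ∀ n, lam n ∈ Set.Icc (0 : ℝ) 1) (n : ℕ) (x : H) :
    ‖lam n • x‖ = lam n * ‖x‖ := by
  rw [norm_smul, Real.norm_of_nonneg (hlam n).1]

theorem norm_succ_sub_le (hlam : ∀ n, lam n ∈ Set.Icc (0 : ℝ) 1)
    (hrec : ∀ n, u (n + 1) = u n + lam n • (T (u n) + ε n - u n)) (q : H) (n : ℕ) :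
    ‖u (n + 1) - q‖ ≤ ‖u n + lam n • (T (u n) - u n) - q‖ + lam n * ‖ε n‖ := calc
  ‖u (n + 1) - q‖ = ‖(u n + lam n • (T (u n) - u n) - q) + lam n • ε n‖ := by
    rw [succ_eq_add_smul_add_smul hrec]
    congr 1
    abel
  _ ≤ _ := by rw [← norm_lam_smul hlam]; exact norm_add_le _ _

theorem norm_sub_fixedPt_succ_le (hT : LipschitzWith 1 T) (hlam : ∀ n, lam n ∈ Set.Icc (0 : ℝ) 1)
    (hrec : ∀ n, u (n + 1) = u n + lam n • (T (u n) + ε n - u n)) {q : H} (hq : IsFixedPt T q)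
    (n : ℕ) : ‖u (n + 1) - q‖ ≤ ‖u n - q‖ + lam n * ‖ε n‖ :=
  (norm_succ_sub_le hlam hrec q n).trans <|
    add_le_add_left (norm_add_smul_sub_fixedPt_le hT hq (hlam n) _) _

theorem sq_norm_sub_fixedPt_succ_le (hT : LipschitzWith 1 T)
    (hlam : ∀ n, lam n ∈ Set.Icc (0 : ℝ) 1)
    (hrec : ∀ n, u (n + 1) = u n + lam n • (T (u n) + ε n - u n)) {q : H} (hq : IsFixedPt T q)
    (n : ℕ) : ‖u (n + 1) - q‖ ^ 2 ≤ ‖u n - q‖ ^ 2 - lam n * (1 - lam n) * ‖T (u n) - u n‖ ^ 2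
      + lam n * ‖ε n‖ * (2 * ‖u n - q‖ + lam n * ‖ε n‖) := by
  have hv := norm_succ_sub_le hlam hrec q n
  have hv1 := norm_add_smul_sub_fixedPt_le hT hq (hlam n) (u n)
  have hv2 := sq_norm_add_smul_sub_fixedPt_le hT hq (hlam n) (u n)
  have hc : 0 ≤ lam n * ‖ε n‖ := mul_nonneg (hlam n).1 (norm_nonneg _)
  nlinarith [norm_nonneg (u (n + 1) - q), norm_nonneg (u n + lam n • (T (u n) - u n) - q)]

theorem norm_residual_succ_le (hT : LipschitzWith 1 T) (hlam : ∀ n, lam n ∈ Set.Icc (0 : ℝ) 1)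
    (hrec : ∀ n, u (n + 1) = u n + lam n • (T (u n) + ε n - u n)) (n : ℕ) :
    ‖T (u (n + 1)) - u (n + 1)‖ ≤ ‖T (u n) - u n‖ + 2 * (lam n * ‖ε n‖) := by
  have hstep : ‖u (n + 1) - u n‖ ≤ lam n * ‖T (u n) - u n‖ + lam n * ‖ε n‖ := by
    rw [succ_eq_add_smul_add_smul hrec, add_assoc, add_sub_cancel_left, ← norm_lam_smul hlam,
      ← norm_lam_smul hlam]
    exact norm_add_le _ _
  have hrest : ‖T (u n) - u (n + 1)‖ ≤ (1 - lam n) * ‖T (u n) - u n‖ + lam n * ‖ε n‖ := by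
    rw [succ_eq_add_smul_add_smul hrec, ← norm_lam_smul hlam n (ε n), show
      T (u n) - (u n + lam n • (T (u n) - u n) + lam n • ε n)
        = (1 - lam n) • (T (u n) - u n) - lam n • ε n by simp only [sub_smul, one_smul]; abel]
    refine (norm_sub_le _ _).trans (add_le_add_left ?_ _)
    rw [norm_smul, Real.norm_of_nonneg (sub_nonneg.2 (hlam n).2)]
  have hT' : ‖T (u (n + 1)) - T (u n)‖ ≤ ‖u (n + 1) - u n‖ := by
    simpa [dist_eq_norm] using hT.dist_le_mul (u (n + 1)) (u n)
  calc ‖T (u (n + 1)) - u (n + 1)‖ ≤ ‖T (u (n + 1)) - T (u n)‖ + ‖T (u n) - u (n + 1)‖ :=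
        norm_sub_le_norm_sub_add_norm_sub _ _ _
    _ ≤ ‖T (u n) - u n‖ + 2 * (lam n * ‖ε n‖) := by linarith

-- The residuals `‖T (u n) - u n‖` converge, and `∑ λ (1 - λ) ‖T (u n) - u n‖² < ∞` while
-- `∑ λ (1 - λ) = ∞`, so they tend to `0`.
theorem exists_mem_fixedPoints_tendsto_inner [CompleteSpace H]
    [TopologicalSpace.SeparableSpace H] (hT : LipschitzWith 1 T)
    (hlam : ∀ n, lam n ∈ Set.Icc (0 : ℝ) 1) (hdiv : ¬ Summable fun n => lam n * (1 - lam n))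
    (hFix : (fixedPoints T).Nonempty)
    (hrec : ∀ n, u (n + 1) = u n + lam n • (T (u n) + ε n - u n))
    (hε : Summable fun n => lam n * ‖ε n‖) :
    ∃ p ∈ fixedPoints T, ∀ y, Tendsto (fun n => ⟪u n, y⟫) atTop (𝓝 ⟪p, y⟫) := by
  obtain ⟨p₀, hp₀⟩ := hFix
  have hc0 : ∀ n, 0 ≤ lam n * ‖ε n‖ := fun n => mul_nonneg (hlam n).1 (norm_nonneg _)
  have hdist : ∀ q ∈ fixedPoints T, ∃ L, Tendsto (fun n => ‖u n - q‖) atTop (𝓝 L) :=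
    fun q hq => exists_tendsto_of_le_add (fun n => norm_nonneg _) hε
      (norm_sub_fixedPt_succ_le hT hlam hrec hq)
  obtain ⟨M, hM⟩ := (hdist p₀ hp₀).choose_spec.bddAbove_range
  obtain ⟨K, hK⟩ := hε.tendsto_atTop_zero.bddAbove_range
  have herr : Summable fun n => lam n * ‖ε n‖ * (2 * ‖u n - p₀‖ + lam n * ‖ε n‖) :=
    (hε.mul_right (2 * M + K)).of_nonneg_of_le
      (fun n => mul_nonneg (hc0 n) (by linarith [norm_nonneg (u n - p₀), hc0 n]))
      (fun n => mul_le_mul_of_nonneg_left (by linarith [hM ⟨n, rfl⟩, hK ⟨n, rfl⟩]) (hc0 n))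
  have hres : Summable fun n => lam n * (1 - lam n) * ‖T (u n) - u n‖ ^ 2 :=
    (exists_tendsto_and_summable_of_le_sub_add (fun n => sq_nonneg ‖u n - p₀‖)
      (fun n => mul_nonneg (mul_nonneg (hlam n).1 (sub_nonneg.2 (hlam n).2)) (sq_nonneg _))
      herr (sq_norm_sub_fixedPt_succ_le hT hlam hrec hp₀)).2
  obtain ⟨δ, hδ⟩ := exists_tendsto_of_le_add (a := fun n => ‖T (u n) - u n‖)
    (fun n => norm_nonneg _) (hε.mul_left 2)
    (norm_residual_succ_le hT hlam hrec)
  obtain rfl : δ = 0 := by_contra fun h => hdiv <| summable_of_summable_mul_sq_of_tendsto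
    (fun n => mul_nonneg (hlam n).1 (sub_nonneg.2 (hlam n).2)) hδ h hres
  have hu : ∀ n, ‖u n‖ ≤ M + ‖p₀‖ := fun n =>
    (norm_le_norm_sub_add (u n) p₀).trans (add_le_add (hM ⟨n, rfl⟩) le_rfl)
  refine exists_tendsto_inner_of_opial hu hdist fun k p hk hkp => ?_
  exact LipschitzWith.isFixedPt_of_tendsto_inner hT
    (fun j => (norm_sub_le _ _).trans (add_le_add (hu (k j)) le_rfl)) hkp (hδ.comp hk)

end KrasnoselskiiMann

section WeakLimit

variable {Ω H : Type*} [MeasurableSpace Ω] {μ : Measure Ω} [NormedAddCommGroup H]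
  [InnerProductSpace ℝ H] [SecondCountableTopology H] [MeasurableSpace H] [BorelSpace H]

-- Projecting onto the spans of initial segments of a dense sequence writes `f` as a pointwise
-- limit of finite sums `∑ ⟪bᵢ, f⟫ • bᵢ`.
theorem aemeasurable_of_forall_aemeasurable_inner {f : Ω → H}
    (hf : ∀ y, AEMeasurable (fun ω => ⟪f ω, y⟫) μ) : AEMeasurable f μ := by
  have : Nonempty H := ⟨0⟩
  let U : ℕ → Submodule ℝ H :=
    fun N => Submodule.span ℝ (TopologicalSpace.denseSeq H '' Set.Iio N)
  have : ∀ N, FiniteDimensional ℝ (U N) :=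
    fun N => FiniteDimensional.span_of_finite ℝ ((Set.finite_Iio N).image _)
  have hU : Monotone U :=
    fun _ _ hab => Submodule.span_mono (Set.image_mono (Set.Iio_subset_Iio hab))
  have hdense : ⊤ ≤ (⨆ N, U N).topologicalClosure := by
    rw [top_le_iff, ← Submodule.dense_iff_topologicalClosure_eq_top]
    refine (TopologicalSpace.denseRange_denseSeq H).mono ?_
    rintro _ ⟨N, rfl⟩
    exact Submodule.mem_iSup_of_mem (N + 1)
      (Submodule.subset_span ⟨N, Set.mem_Iio.2 N.lt_succ_self, rfl⟩)
  refine aemeasurable_of_tendsto_metrizable_ae' (fun N => ?_)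
    (ae_of_all _ fun ω => Submodule.starProjection_tendsto_self U hU (f ω) hdense)
  let b := stdOrthonormalBasis ℝ (U N)
  have hsum : (fun ω => (U N).starProjection (f ω)) = fun ω => ∑ i, ⟪(b i : H), f ω⟫ • (b i : H) :=
    funext fun ω => by
      rw [Submodule.starProjection_apply, b.orthogonalProjectionOnto_apply_eq_sum]
      simp
  rw [hsum]
  refine Finset.aemeasurable_fun_sum _ fun i _ =>
    AEMeasurable.smul_const ?_ (b i : H)
  exact (hf (b i)).congr (ae_of_all _ fun ω => real_inner_comm _ _)

theorem exists_measurable_ae_tendsto_inner {x : ℕ → Ω → H} (hx : ∀ n, Measurable (x n))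
    {C : Set H} (h : ∀ᵐ ω ∂μ, ∃ p ∈ C, ∀ y, Tendsto (fun n => ⟪x n ω, y⟫) atTop (𝓝 ⟪p, y⟫)) :
    ∃ xlim : Ω → H, Measurable xlim ∧
      ∀ᵐ ω ∂μ, xlim ω ∈ C ∧ ∀ y, Tendsto (fun n => ⟪x n ω, y⟫) atTop (𝓝 ⟪xlim ω, y⟫) := by
  classical
  let p : Ω → H := fun ω =>
    if hω : ∃ p ∈ C, ∀ y, Tendsto (fun n => ⟪x n ω, y⟫) atTop (𝓝 ⟪p, y⟫) then hω.choose else 0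
  have hp : ∀ᵐ ω ∂μ, p ω ∈ C ∧ ∀ y, Tendsto (fun n => ⟪x n ω, y⟫) atTop (𝓝 ⟪p ω, y⟫) :=
    h.mono fun ω hω => by simpa only [p, dif_pos hω] using hω.choose_spec
  have hpm : AEMeasurable p μ := aemeasurable_of_forall_aemeasurable_inner fun y =>
    aemeasurable_of_tendsto_metrizable_ae' (fun n => ((hx n).inner_const).aemeasurable)
      (hp.mono fun ω hω => hω.2 y)
  refine ⟨hpm.mk p, hpm.measurable_mk, ?_⟩
  filter_upwards [hp, hpm.ae_eq_mk] with ω hω heq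
  rwa [← heq]

end WeakLimit

section ConditionalSummability

variable {Ω : Type*} {m0 : MeasurableSpace Ω} {P : Measure Ω} [IsFiniteMeasure P]

theorem condExp_le_sqrt_condExp_sq {m : MeasurableSpace Ω} {f : Ω → ℝ} (hf : Integrable f P)
    (hf2 : Integrable (fun ω => f ω ^ 2) P) :
    P[f|m] ≤ᵐ[P] fun ω => √(P[fun ω' => f ω' ^ 2|m] ω) := by
  by_cases hm : m ≤ m0
  · filter_upwards [(even_two.convexOn_pow (𝕜 := ℝ)).map_condExp_le_univ hm
      (continuous_pow 2).lowerSemicontinuous hf hf2] with ω hω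
    exact (le_abs_self _).trans (Real.abs_le_sqrt hω)
  · exact ae_of_all _ fun ω => by simp [condExp_of_not_le hm]

theorem setLIntegral_ofReal_le_of_condExp_le {m : MeasurableSpace Ω} (hm : m ≤ m0)
    {f g : Ω → ℝ} (hf0 : 0 ≤ f) (hf : Integrable f P) (hle : P[f|m] ≤ᵐ[P] g) {s : Set Ω}
    (hs : MeasurableSet[m] s) :
    ∫⁻ ω in s, ENNReal.ofReal (f ω) ∂P ≤ ∫⁻ ω in s, ENNReal.ofReal (g ω) ∂P := calc
  _ = ENNReal.ofReal (∫ ω in s, f ω ∂P) :=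
    (ofReal_integral_eq_lintegral_ofReal hf.integrableOn (ae_of_all _ hf0)).symm
  _ = ENNReal.ofReal (∫ ω in s, P[f|m] ω ∂P) := by rw [setIntegral_condExp hm hf hs]
  _ = ∫⁻ ω in s, ENNReal.ofReal (P[f|m] ω) ∂P :=
    ofReal_integral_eq_lintegral_ofReal integrable_condExp.integrableOn
      (ae_restrict_of_ae (condExp_nonneg (ae_of_all _ hf0)))
  _ ≤ _ := lintegral_mono_ae (ae_restrict_of_ae (hle.mono fun _ h => ENNReal.ofReal_le_ofReal h))

theorem sum_range_ite_sum_range_succ_le (a : ℕ → ℝ≥0∞) (c : ℝ≥0∞) (N : ℕ) :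
    ∑ n ∈ Finset.range N, (if ∑ k ∈ Finset.range (n + 1), a k ≤ c then a n else 0) ≤ c := by
  induction N with
  | zero => simp
  | succ N ih =>
    by_cases hN : ∑ k ∈ Finset.range (N + 1), a k ≤ c
    · refine le_trans (Finset.sum_le_sum fun n _ => ?_) hN
      split_ifs <;> simp
    · rwa [Finset.sum_range_succ, if_neg hN, add_zero]

theorem ae_summable_of_condExp_le_of_sum_le {ℱ : Filtration ℕ m0} {Z g : ℕ → Ω → ℝ}
    (hZ0 : ∀ n, 0 ≤ Z n) (hZ : ∀ n, Integrable (Z n) P) (hg : Adapted ℱ g)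
    (hle : ∀ n, P[Z n|ℱ n] ≤ᵐ[P] g n) {c : ℝ≥0∞} (hc : c ≠ ∞) :
    ∀ᵐ ω ∂P, (∀ n, ∑ k ∈ Finset.range (n + 1), ENNReal.ofReal (g k ω) ≤ c) →
      Summable fun n => Z n ω := by
  let B : ℕ → Set Ω := fun n => {ω | ∑ k ∈ Finset.range (n + 1), ENNReal.ofReal (g k ω) ≤ c}
  have hB : ∀ n, MeasurableSet[ℱ n] (B n) := fun n =>
    measurableSet_le (Finset.measurable_sum _ fun k hk => ((hg k).mono
      (ℱ.mono (Nat.lt_succ_iff.1 (Finset.mem_range.1 hk))) le_rfl).ennreal_ofReal)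
      measurable_const
  have hB' : ∀ n, MeasurableSet (B n) := fun n => ℱ.le n _ (hB n)
  have hZm : ∀ n, AEMeasurable (fun ω => ENNReal.ofReal (Z n ω)) P :=
    fun n => (hZ n).aemeasurable.ennreal_ofReal
  have hbound : ∫⁻ ω, ∑' n, (B n).indicator (fun ω => ENNReal.ofReal (Z n ω)) ω ∂P ≠ ∞ := by
    refine ne_top_of_le_ne_top (lintegral_const_lt_top (μ := P) hc).ne ?_
    calc ∫⁻ ω, ∑' n, (B n).indicator (fun ω => ENNReal.ofReal (Z n ω)) ω ∂P
        = ∑' n, ∫⁻ ω in B n, ENNReal.ofReal (Z n ω) ∂P := by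
          rw [lintegral_tsum fun n => (hZm n).indicator (hB' n)]
          simp_rw [lintegral_indicator (hB' _)]
      _ ≤ ∑' n, ∫⁻ ω in B n, ENNReal.ofReal (g n ω) ∂P := ENNReal.tsum_le_tsum fun n =>
          setLIntegral_ofReal_le_of_condExp_le (ℱ.le n) (hZ0 n) (hZ n) (hle n) (hB n)
      _ = ∫⁻ ω, ∑' n, (B n).indicator (fun ω => ENNReal.ofReal (g n ω)) ω ∂P := by
          rw [lintegral_tsum fun n => (((hg n).mono (ℱ.le n) le_rfl).ennreal_ofReal.indicator
            (hB' n)).aemeasurable]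
          simp_rw [lintegral_indicator (hB' _)]
      _ ≤ ∫⁻ _, c ∂P := lintegral_mono fun ω =>
          ENNReal.tsum_le_of_sum_range_le fun N => by
            simpa only [Set.indicator_apply, B, Set.mem_ofPred_eq] using
              sum_range_ite_sum_range_succ_le (fun k => ENNReal.ofReal (g k ω)) c N
  filter_upwards [ae_lt_top' (AEMeasurable.tsum fun n => (hZm n).indicator (hB' n))
    hbound] with ω hω hωB
  simp only [Set.indicator_of_mem (show ω ∈ B _ from hωB _)] at hω
  simpa only [ENNReal.toReal_ofReal (hZ0 _ ω)] using ENNReal.summable_toReal hω.ne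

theorem ae_summable_of_condExp_le {ℱ : Filtration ℕ m0} {Z g : ℕ → Ω → ℝ}
    (hZ0 : ∀ n, 0 ≤ Z n) (hZ : ∀ n, Integrable (Z n) P) (hg0 : ∀ n, 0 ≤ g n)
    (hg : Adapted ℱ g) (hle : ∀ n, P[Z n|ℱ n] ≤ᵐ[P] g n)
    (hgs : ∀ᵐ ω ∂P, Summable fun n => g n ω) :
    ∀ᵐ ω ∂P, Summable fun n => Z n ω := by
  have hlevels := ae_all_iff.2 fun c : ℕ =>
    ae_summable_of_condExp_le_of_sum_le hZ0 hZ hg hle (ENNReal.natCast_ne_top c)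
  filter_upwards [hlevels, hgs] with ω hω hsum
  obtain ⟨c, hc⟩ := exists_nat_ge (∑' n, g n ω)
  refine hω c fun n => ?_
  rw [← ENNReal.ofReal_sum_of_nonneg fun k _ => hg0 k ω, ← ENNReal.ofReal_natCast]
  exact ENNReal.ofReal_le_ofReal ((hsum.sum_le_tsum _ fun k _ => hg0 k ω).trans hc)

end ConditionalSummability

theorem krasnoselskii_mann_stochastic_weak_convergence
    {H : Type*} [NormedAddCommGroup H] [InnerProductSpace ℝ H] [CompleteSpace H]
    [SecondCountableTopology H] [MeasurableSpace H] [BorelSpace H]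
    {Ω : Type*} [MeasurableSpace Ω] (P : Measure Ω) [IsProbabilityMeasure P]
    (lam : ℕ → ℝ) (hlam : ∀ n, lam n ∈ Set.Icc (0 : ℝ) 1)
    (hlamdiv : ¬ Summable fun n => lam n * (1 - lam n))
    (T : H → H) (hT : LipschitzWith 1 T) (hFix : (Function.fixedPoints T).Nonempty)
    (x e : ℕ → Ω → H)
    (hxm : ∀ n, Measurable (x n)) (hem : ∀ n, Measurable (e n))
    (hrec : ∀ n, ∀ ω, x (n + 1) ω = x n ω + lam n • (T (x n ω) + e n ω - x n ω))
    (heint : ∀ n, Integrable (fun ω => ‖e n ω‖ ^ 2) P)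
    (hesum : ∀ᵐ ω ∂P, Summable fun n =>
      lam n * Real.sqrt ((P[fun ω' => ‖e n ω'‖ ^ 2 | sigmaFinSeq x n]) ω))
    :
    ∃ xlim : Ω → H, Measurable xlim ∧ (∀ᵐ ω ∂P, xlim ω ∈ Function.fixedPoints T) ∧
      ∀ᵐ ω ∂P, ∀ y : H,
        Tendsto (fun n => (inner ℝ (x n ω) y : ℝ)) atTop (𝓝 (inner ℝ (xlim ω) y : ℝ)) := by
  -- `ℱ n` unfolds to `sigmaFinSeq x n`
  let ℱ := Filtration.natural x fun n => (hxm n).stronglyMeasurable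
  have he : ∀ n, Integrable (fun ω => ‖e n ω‖) P := fun n =>
    ((memLp_two_iff_integrable_sq (hem n).norm.aestronglyMeasurable).2 (heint n)).integrable
      one_le_two
  have hcond : ∀ n, P[fun ω => lam n * ‖e n ω‖|ℱ n]
      ≤ᵐ[P] fun ω => lam n * √(P[fun ω' => ‖e n ω'‖ ^ 2|sigmaFinSeq x n] ω) := fun n => by
    filter_upwards [condExp_smul (lam n) (fun ω => ‖e n ω‖) (ℱ n),
      condExp_le_sqrt_condExp_sq (m := ℱ n) (he n) (heint n)] with ω hsmul hsqrt
    rw [show (fun ω => lam n * ‖e n ω‖) = lam n • fun ω => ‖e n ω‖ from rfl, hsmul]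
    exact mul_le_mul_of_nonneg_left hsqrt (hlam n).1
  have herr : ∀ᵐ ω ∂P, Summable fun n => lam n * ‖e n ω‖ :=
    ae_summable_of_condExp_le (ℱ := ℱ) (fun n ω => mul_nonneg (hlam n).1 (norm_nonneg _))
      (fun n => (he n).const_mul _) (fun n ω => mul_nonneg (hlam n).1 (Real.sqrt_nonneg _))
      (fun n => stronglyMeasurable_condExp.measurable.sqrt.const_mul _) hcond hesum
  have hpath : ∀ᵐ ω ∂P, ∃ p ∈ Function.fixedPoints T,
      ∀ y, Tendsto (fun n => ⟪x n ω, y⟫) atTop (𝓝 ⟪p, y⟫) := herr.mono fun ω hω =>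
    KrasnoselskiiMann.exists_mem_fixedPoints_tendsto_inner hT hlam hlamdiv hFix
      (fun n => hrec n ω) hω
  obtain ⟨xlim, hmeas, hlim⟩ := exists_measurable_ae_tendsto_inner hxm hpath
  exact ⟨xlim, hmeas, hlim.mono fun _ h => h.1, hlim.mono fun _ h => h.2⟩
end
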